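/- arXiv:2106.02950 — 4 statements merged into one kernel-verified Lean document; each statement's English description precedes it below -/
import Mathlib

section
/- Second-order Taylor expansion of the deformation gradient: for k = 1 or 2, L(x,t; t−kΔt, t) = I + kΔt (∇u)(x,t) + ((kΔt)²/2) U(x,t) + O(Δt³), where U := (∇u)² − D(∇u)/Dt and D/Dt = ∂/∂t + u·∇ is the material derivative. -/
open Matrix

/-- The velocity gradient matrix `(∇u)_{ik} = ∂u_i/∂x_k`. -/
noncomputable def gradU {d : ℕ} (u : (Fin d → ℝ) → ℝ → (Fin d → ℝ))
    (x : Fin d → ℝ) (t : ℝ) : Matrix (Fin d) (Fin d) ℝ :=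
  Matrix.of fun i k => fderiv ℝ (fun z => u z t i) x (Pi.single k 1)

/-- `U := (∇u)² − D(∇u)/Dt`, where `D/Dt = ∂/∂t + u·∇` is the material derivative. -/
noncomputable def Umat {d : ℕ} (u : (Fin d → ℝ) → ℝ → (Fin d → ℝ))
    (x : Fin d → ℝ) (t : ℝ) : Matrix (Fin d) (Fin d) ℝ :=
  gradU u x t * gradU u x t -
    Matrix.of fun a b =>
      deriv (fun τ => gradU u x τ a b) t
        + fderiv ℝ (fun z => gradU u z t a b) x (u x t)

namespace DGTaux

lemma curve_fderiv {E F : Type*} [NormedAddCommGroup E] [NormedSpace ℝ E]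
    [NormedAddCommGroup F] [NormedSpace ℝ F] {f : E → F} {c : ℝ → E} {p v : E} {r : F}
    {t₀ : ℝ} (hf : DifferentiableAt ℝ f p) (hc : HasDerivAt c v t₀) (h0 : c t₀ = p)
    (hr : HasDerivAt (fun s => f (c s)) r t₀) : fderiv ℝ f p v = r := by
  subst h0
  exact (hf.hasFDerivAt.comp_hasDerivAt t₀ hc).unique hr

lemma hasDerivAt_line {E : Type*} [NormedAddCommGroup E] [NormedSpace ℝ E] (p v : E) (t₀ : ℝ) :
    HasDerivAt (fun ε : ℝ => p + ε • v) v t₀ := by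
  simpa using ((hasDerivAt_id t₀).smul_const v).const_add p

lemma hasDerivAt_comp_line {E F : Type*} [NormedAddCommGroup E] [NormedSpace ℝ E]
    [NormedAddCommGroup F] [NormedSpace ℝ F] {f : E → F} {p w : E}
    (hf : DifferentiableAt ℝ f p) :
    HasDerivAt (fun ε : ℝ => f (p + ε • w)) (fderiv ℝ f p w) 0 := by
  have hl : HasFDerivAt f (fderiv ℝ f p) ((fun ε : ℝ => p + ε • w) 0) := by
    simpa using hf.hasFDerivAt
  exact hl.comp_hasDerivAt 0 (hasDerivAt_line p w 0)


lemma hasDerivAt_affine (s c : ℝ) (t₀ : ℝ) :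
    HasDerivAt (fun ε : ℝ => s + ε * c) c t₀ := by
  simpa using ((hasDerivAt_id t₀).mul_const c).const_add s

lemma ev_fderiv {E : Type*} [NormedAddCommGroup E] [NormedSpace ℝ E] {f : E → ℝ}
    (hf : ContDiff ℝ (⊤ : ℕ∞) f) (p v w : E) :
    fderiv ℝ (fun q => fderiv ℝ f q v) p w = fderiv ℝ (fderiv ℝ f) p w v := by
  have hd : DifferentiableAt ℝ (fderiv ℝ f) p :=
    ((hf.fderiv_right (by simp)).differentiable (n := (⊤ : ℕ∞)) (by simp)).differentiableAt
  have h := (ContinuousLinearMap.apply ℝ ℝ v).hasFDerivAt.comp p hd.hasFDerivAt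
  have h2 : fderiv ℝ (fun q => fderiv ℝ f q v) p
      = (ContinuousLinearMap.apply ℝ ℝ v).comp (fderiv ℝ (fderiv ℝ f) p) := h.fderiv
  rw [h2]; rfl

lemma swap_fderiv {E : Type*} [NormedAddCommGroup E] [NormedSpace ℝ E] {f : E → ℝ}
    (hf : ContDiff ℝ (⊤ : ℕ∞) f) (p v w : E) :
    fderiv ℝ (fun q => fderiv ℝ f q v) p w = fderiv ℝ (fun q => fderiv ℝ f q w) p v := by
  rw [ev_fderiv hf, ev_fderiv hf]
  exact (hf.contDiffAt.isSymmSndFDerivAt (by rw [minSmoothness_of_isRCLikeNormedField]; exact WithTop.coe_le_coe.2 le_top)) w v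

open intervalIntegral MeasureTheory

lemma step_bound {h ψ B : ℝ → ℝ} {τ : ℝ} (hτ : 0 ≤ τ)
    (h0 : h 0 = 0) (hd : ∀ ρ, HasDerivAt h (ψ ρ) ρ) (hψc : Continuous ψ)
    (hBc : Continuous B) (hb : ∀ ρ ∈ Set.Icc 0 τ, |ψ ρ| ≤ B ρ) :
    ∀ σ ∈ Set.Icc 0 τ, |h σ| ≤ ∫ ρ in (0:ℝ)..σ, B ρ := by
  intro σ hσ
  have hint : ∫ ρ in (0:ℝ)..σ, ψ ρ = h σ - h 0 :=
    integral_eq_sub_of_hasDerivAt (fun x _ => hd x) (hψc.intervalIntegrable 0 σ)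
  have h1 : |h σ| = |∫ ρ in (0:ℝ)..σ, ψ ρ| := by rw [hint, h0, sub_zero]
  rw [h1]
  calc |∫ ρ in (0:ℝ)..σ, ψ ρ| ≤ ∫ ρ in (0:ℝ)..σ, |ψ ρ| :=
        intervalIntegral.abs_integral_le_integral_abs hσ.1
    _ ≤ ∫ ρ in (0:ℝ)..σ, B ρ := by
        apply intervalIntegral.integral_mono_on hσ.1
          (hψc.abs.intervalIntegrable 0 σ) (hBc.intervalIntegrable 0 σ)
        intro x hx
        exact hb x ⟨hx.1, hx.2.trans hσ.2⟩

lemma taylor_bound {g g1 g2 g3 : ℝ → ℝ} {M τ : ℝ} (hτ : 0 ≤ τ)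
    (h1 : ∀ σ, HasDerivAt g (g1 σ) σ) (h2 : ∀ σ, HasDerivAt g1 (g2 σ) σ)
    (h3 : ∀ σ, HasDerivAt g2 (g3 σ) σ)
    (hc1 : Continuous g1) (hc2 : Continuous g2) (hc3 : Continuous g3)
    (hM : ∀ σ ∈ Set.Icc 0 τ, |g3 σ| ≤ M) :
    |g τ - g 0 - τ * g1 0 - τ ^ 2 / 2 * g2 0| ≤ M * τ ^ 3 / 6 := by
  have hA : ∀ σ ∈ Set.Icc 0 τ, |g2 σ - g2 0| ≤ M * σ := by
    have := step_bound hτ (h := fun σ => g2 σ - g2 0) (ψ := g3) (B := fun _ => M)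
      (by simp) (fun ρ => (h3 ρ).sub_const _) hc3 continuous_const hM
    intro σ hσ
    have h' := this σ hσ
    simpa [intervalIntegral.integral_const, smul_eq_mul, mul_comm] using h'
  have hB : ∀ σ ∈ Set.Icc 0 τ, |g1 σ - g1 0 - σ * g2 0| ≤ M * σ ^ 2 / 2 := by
    have := step_bound hτ (h := fun σ => g1 σ - g1 0 - σ * g2 0)
      (ψ := fun σ => g2 σ - g2 0) (B := fun σ => M * σ)
      (by simp) (fun ρ => (((h2 ρ).sub_const _).sub ((hasDerivAt_mul_const (g2 0)))))
      (by fun_prop) (by fun_prop) hA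
    intro σ hσ
    have h' := this σ hσ
    have hint : ∫ ρ in (0:ℝ)..σ, M * ρ = M * σ ^ 2 / 2 := by
      rw [intervalIntegral.integral_const_mul, integral_id]; ring
    rwa [hint] at h'
  have hC := step_bound hτ (h := fun σ => g σ - g 0 - σ * g1 0 - σ ^ 2 / 2 * g2 0)
    (ψ := fun σ => g1 σ - g1 0 - σ * g2 0) (B := fun σ => M * σ ^ 2 / 2)
    (by simp)
    (fun ρ => by
      have hp : HasDerivAt (fun σ : ℝ => σ ^ 2 / 2 * g2 0) (ρ * g2 0) ρ := by
        have := ((hasDerivAt_pow 2 ρ).div_const 2).mul_const (g2 0)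
        simpa [pow_one] using this
      exact (((h1 ρ).sub_const (g 0)).sub (hasDerivAt_mul_const (g1 0))).sub hp)
    (by fun_prop) (by fun_prop) hB
  have h' := hC τ ⟨hτ, le_rfl⟩
  have hint : ∫ ρ in (0:ℝ)..τ, M * ρ ^ 2 / 2 = M * τ ^ 3 / 6 := by
    have : ∀ ρ : ℝ, M * ρ ^ 2 / 2 = (M / 2) * ρ ^ 2 := by intro ρ; ring
    simp_rw [this]
    rw [intervalIntegral.integral_const_mul, integral_pow]
    norm_num; ring
  rwa [hint] at h'


noncomputable section


variable {d : ℕ}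

/-- component of the flow map, as a function on `E × ℝ × ℝ`. -/
def Phia (X : (Fin d → ℝ) → ℝ → ℝ → (Fin d → ℝ)) (a : Fin d) :
    (Fin d → ℝ) × ℝ × ℝ → ℝ := fun q => X q.1 q.2.1 q.2.2 a

/-- entry `(a,b)` of the spatial Jacobian of the flow map, as total directional derivative. -/
def fab (X : (Fin d → ℝ) → ℝ → ℝ → (Fin d → ℝ)) (a b : Fin d) :
    (Fin d → ℝ) × ℝ × ℝ → ℝ :=
  fun q => fderiv ℝ (Phia X a) q ((Pi.single b 1 : Fin d → ℝ), 0, 0)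

variable {u : (Fin d → ℝ) → ℝ → (Fin d → ℝ)} {X : (Fin d → ℝ) → ℝ → ℝ → (Fin d → ℝ)}

lemma contDiff_Phia (hX : ContDiff ℝ (⊤ : ℕ∞) (fun q : (Fin d → ℝ) × ℝ × ℝ => X q.1 q.2.1 q.2.2))
    (a : Fin d) : ContDiff ℝ (⊤ : ℕ∞) (Phia X a) :=
  (ContinuousLinearMap.proj (R := ℝ) (φ := fun _ : Fin d => ℝ) a).contDiff.comp hX

lemma contDiff_fab (hX : ContDiff ℝ (⊤ : ℕ∞) (fun q : (Fin d → ℝ) × ℝ × ℝ => X q.1 q.2.1 q.2.2))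
    (a b : Fin d) : ContDiff ℝ (⊤ : ℕ∞) (fab X a b) :=
  ((contDiff_Phia hX a).fderiv_right (by simp)).clm_apply contDiff_const

/-- spatial slice identity for `fderiv Phia`. -/
lemma fderiv_Phia_sp (hX : ContDiff ℝ (⊤ : ℕ∞) (fun q : (Fin d → ℝ) × ℝ × ℝ => X q.1 q.2.1 q.2.2))
    (a : Fin d) (z : Fin d → ℝ) (s r : ℝ) (w : Fin d → ℝ) :
    fderiv ℝ (Phia X a) (z, s, r) (w, 0, 0) = fderiv ℝ (fun z' => X z' s r a) z w := by
  have hsl : DifferentiableAt ℝ (fun z' => X z' s r a) z := by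
    have : (fun z' => X z' s r a) = (Phia X a) ∘ (fun z' => (z', s, r)) := rfl
    rw [this]
    exact (((contDiff_Phia hX a).differentiable (n := (⊤ : ℕ∞)) (by simp)).differentiableAt).comp z
      ((differentiable_id.prodMk (differentiable_const _)).differentiableAt)
  refine curve_fderiv (((contDiff_Phia hX a).differentiable (n := (⊤ : ℕ∞)) (by simp)).differentiableAt)
    (c := fun ε : ℝ => (z + ε • w, s, r)) (t₀ := 0)
    (((hasDerivAt_line z w 0).prodMk ((hasDerivAt_const 0 s).prodMk (hasDerivAt_const 0 r))) )
    (by simp) ?_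
  exact hasDerivAt_comp_line hsl

/-- time-2 derivative of `Phia` (the ODE). -/
lemma fderiv_Phia_e2 (hX : ContDiff ℝ (⊤ : ℕ∞) (fun q : (Fin d → ℝ) × ℝ × ℝ => X q.1 q.2.1 q.2.2))
    (hXode : ∀ x t s, HasDerivAt (fun s' => X x t s') (u (X x t s) s) s)
    (a : Fin d) (q : (Fin d → ℝ) × ℝ × ℝ) :
    fderiv ℝ (Phia X a) q ((0 : Fin d → ℝ), 0, 1) = u (X q.1 q.2.1 q.2.2) q.2.2 a := by
  refine curve_fderiv (((contDiff_Phia hX a).differentiable (n := (⊤ : ℕ∞)) (by simp)).differentiableAt)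
    (c := fun s => (q.1, q.2.1, s)) (t₀ := q.2.2)
    ((hasDerivAt_const _ q.1).prodMk ((hasDerivAt_const _ q.2.1).prodMk (hasDerivAt_id _))) rfl ?_
  exact (ContinuousLinearMap.proj (R := ℝ) (φ := fun _ : Fin d => ℝ) a).hasFDerivAt.comp_hasDerivAt
    _ (hXode q.1 q.2.1 q.2.2)

/-- time-1 derivative of `Phia` on the diagonal. -/
lemma fderiv_Phia_diag_e1 (hX : ContDiff ℝ (⊤ : ℕ∞) (fun q : (Fin d → ℝ) × ℝ × ℝ => X q.1 q.2.1 q.2.2))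
    (hX0 : ∀ x t, X x t t = x)
    (hXode : ∀ x t s, HasDerivAt (fun s' => X x t s') (u (X x t s) s) s)
    (a : Fin d) (z : Fin d → ℝ) (s : ℝ) :
    fderiv ℝ (Phia X a) (z, s, s) ((0 : Fin d → ℝ), 1, 0) = -(u z s a) := by
  have h11 : fderiv ℝ (Phia X a) (z, s, s) ((0 : Fin d → ℝ), 1, 1) = 0 := by
    refine curve_fderiv (((contDiff_Phia hX a).differentiable (n := (⊤ : ℕ∞)) (by simp)).differentiableAt)
      (c := fun r : ℝ => (z, r, r)) (t₀ := s)
      ((hasDerivAt_const _ z).prodMk ((hasDerivAt_id _).prodMk (hasDerivAt_id _))) rfl ?_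
    have : (fun r : ℝ => Phia X a (z, r, r)) = fun _ : ℝ => z a := by
      funext r; simp [Phia, hX0]
    rw [this]
    exact hasDerivAt_const _ _
  have hsplit : ((0 : Fin d → ℝ), (1:ℝ), (0:ℝ)) = ((0 : Fin d → ℝ), (1:ℝ), (1:ℝ)) - (0, 0, 1) := by
    simp [Prod.ext_iff]
  rw [hsplit, map_sub, h11, fderiv_Phia_e2 hX hXode a, hX0]
  simp



/-- `u` uncurried, one component. -/
def U2a (u : (Fin d → ℝ) → ℝ → (Fin d → ℝ)) (a : Fin d) : (Fin d → ℝ) × ℝ → ℝ :=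
  fun p => u p.1 p.2 a

/-- `u` along the flow, one component. -/
def Ua (u : (Fin d → ℝ) → ℝ → (Fin d → ℝ)) (X : (Fin d → ℝ) → ℝ → ℝ → (Fin d → ℝ))
    (a : Fin d) : (Fin d → ℝ) × ℝ × ℝ → ℝ :=
  fun q => u (X q.1 q.2.1 q.2.2) q.2.2 a

lemma contDiff_U2a (hu : ContDiff ℝ (⊤ : ℕ∞) (fun q : (Fin d → ℝ) × ℝ => u q.1 q.2)) (a : Fin d) :
    ContDiff ℝ (⊤ : ℕ∞) (U2a u a) :=
  (ContinuousLinearMap.proj (R := ℝ) (φ := fun _ : Fin d => ℝ) a).contDiff.comp hu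

lemma contDiff_uslice (hu : ContDiff ℝ (⊤ : ℕ∞) (fun q : (Fin d → ℝ) × ℝ => u q.1 q.2)) (t : ℝ) :
    ContDiff ℝ (⊤ : ℕ∞) (fun z => u z t) :=
  hu.comp (contDiff_id.prodMk contDiff_const)

lemma contDiff_ua (hu : ContDiff ℝ (⊤ : ℕ∞) (fun q : (Fin d → ℝ) × ℝ => u q.1 q.2)) (a : Fin d)
    (t : ℝ) : ContDiff ℝ (⊤ : ℕ∞) (fun z => u z t a) :=
  (contDiff_U2a hu a).comp (contDiff_id.prodMk contDiff_const)

lemma contDiff_Ua (hu : ContDiff ℝ (⊤ : ℕ∞) (fun q : (Fin d → ℝ) × ℝ => u q.1 q.2))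
    (hX : ContDiff ℝ (⊤ : ℕ∞) (fun q : (Fin d → ℝ) × ℝ × ℝ => X q.1 q.2.1 q.2.2)) (a : Fin d) :
    ContDiff ℝ (⊤ : ℕ∞) (Ua u X a) :=
  (contDiff_U2a hu a).comp (hX.prodMk (contDiff_snd.comp contDiff_snd))

/-- spatial slice for `U2a`. -/
lemma fderiv_U2a_sp (hu : ContDiff ℝ (⊤ : ℕ∞) (fun q : (Fin d → ℝ) × ℝ => u q.1 q.2)) (a : Fin d)
    (z : Fin d → ℝ) (s : ℝ) (y : Fin d → ℝ) :
    fderiv ℝ (U2a u a) (z, s) (y, 0) = fderiv ℝ (fun z' => u z' s a) z y := by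
  refine curve_fderiv (((contDiff_U2a hu a).differentiable (n := (⊤ : ℕ∞)) (by simp)).differentiableAt)
    (c := fun ε : ℝ => (z + ε • y, s)) (t₀ := 0)
    ((hasDerivAt_line z y 0).prodMk (hasDerivAt_const 0 s)) (by simp) ?_
  exact hasDerivAt_comp_line (((contDiff_ua hu a s).differentiable (n := (⊤ : ℕ∞)) (by simp)).differentiableAt)

/-- value of `fab` on the diagonal. -/
lemma fab_diag (hX : ContDiff ℝ (⊤ : ℕ∞) (fun q : (Fin d → ℝ) × ℝ × ℝ => X q.1 q.2.1 q.2.2))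
    (hX0 : ∀ x t, X x t t = x) (a b : Fin d) (z : Fin d → ℝ) (s : ℝ) :
    fab X a b (z, s, s) = (Pi.single b 1 : Fin d → ℝ) a := by
  show fderiv ℝ (Phia X a) (z,s,s) ((Pi.single b 1 : Fin d → ℝ), 0, 0) = _
  rw [fderiv_Phia_sp hX a z s s]
  have h1 : (fun z' : Fin d → ℝ => X z' s s a) = fun z' => z' a := by
    funext z'; rw [hX0]
  rw [h1]
  have h2 : (fun z' : Fin d → ℝ => z' a)
      = (ContinuousLinearMap.proj (R := ℝ) (φ := fun _ : Fin d => ℝ) a : (Fin d → ℝ) →L[ℝ] ℝ) := rfl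
  rw [h2, ContinuousLinearMap.fderiv]
  rfl

/-- derivative of `fab` along diagonal directions vanishes on the diagonal. -/
lemma fderiv_fab_diag_dir (hX : ContDiff ℝ (⊤ : ℕ∞) (fun q : (Fin d → ℝ) × ℝ × ℝ => X q.1 q.2.1 q.2.2))
    (hX0 : ∀ x t, X x t t = x) (a b : Fin d) (z : Fin d → ℝ) (s : ℝ) (w : Fin d → ℝ) (c : ℝ) :
    fderiv ℝ (fab X a b) (z, s, s) (w, c, c) = 0 := by
  refine curve_fderiv (((contDiff_fab hX a b).differentiable (n := (⊤ : ℕ∞)) (by simp)).differentiableAt)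
    (c := fun ε : ℝ => (z + ε • w, s + ε * c, s + ε * c)) (t₀ := 0)
    ((hasDerivAt_line z w 0).prodMk
      ((hasDerivAt_affine s c 0).prodMk (hasDerivAt_affine s c 0))) (by simp) ?_
  have h1 : (fun ε : ℝ => fab X a b (z + ε • w, s + ε * c, s + ε * c))
      = fun _ : ℝ => (Pi.single b 1 : Fin d → ℝ) a := by
    funext ε; rw [fab_diag hX hX0]
  rw [h1]
  exact hasDerivAt_const _ _

/-- second derivative of `fab` along diagonal directions vanishes on the diagonal. -/
lemma fderiv2_fab_diag (hX : ContDiff ℝ (⊤ : ℕ∞) (fun q : (Fin d → ℝ) × ℝ × ℝ => X q.1 q.2.1 q.2.2))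
    (hX0 : ∀ x t, X x t t = x) (a b : Fin d) (z : Fin d → ℝ) (s : ℝ)
    (w w' : Fin d → ℝ) (c c' : ℝ) :
    fderiv ℝ (fun q => fderiv ℝ (fab X a b) q (w', c', c')) (z, s, s) (w, c, c) = 0 := by
  have hdiff : DifferentiableAt ℝ (fun q => fderiv ℝ (fab X a b) q (w', c', c')) (z, s, s) :=
    ((((contDiff_fab hX a b).fderiv_right (by simp)).clm_apply contDiff_const).differentiable
      (n := (⊤ : ℕ∞)) (by simp)).differentiableAt
  refine curve_fderiv hdiff
    (c := fun ε : ℝ => (z + ε • w, s + ε * c, s + ε * c)) (t₀ := 0)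
    ((hasDerivAt_line z w 0).prodMk
      ((hasDerivAt_affine s c 0).prodMk (hasDerivAt_affine s c 0))) (by simp) ?_
  have h1 : (fun ε : ℝ => fderiv ℝ (fab X a b) (z + ε • w, s + ε * c, s + ε * c) (w', c', c'))
      = fun _ : ℝ => 0 := by
    funext ε; rw [fderiv_fab_diag_dir hX hX0]
  rw [h1]
  exact hasDerivAt_const _ _

/-- the `t₁`-derivative of `fab` on the diagonal is `-∇u`. -/
lemma fderiv_fab_diag_e1 (hu : ContDiff ℝ (⊤ : ℕ∞) (fun q : (Fin d → ℝ) × ℝ => u q.1 q.2))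
    (hX : ContDiff ℝ (⊤ : ℕ∞) (fun q : (Fin d → ℝ) × ℝ × ℝ => X q.1 q.2.1 q.2.2))
    (hX0 : ∀ x t, X x t t = x)
    (hXode : ∀ x t s, HasDerivAt (fun s' => X x t s') (u (X x t s) s) s)
    (a b : Fin d) (x : Fin d → ℝ) (t : ℝ) :
    fderiv ℝ (fab X a b) (x, t, t) ((0 : Fin d → ℝ), 1, 0)
      = -(fderiv ℝ (fun z => u z t a) x (Pi.single b 1)) := by
  have hswap := swap_fderiv (contDiff_Phia hX a) ((x, t, t) : (Fin d → ℝ) × ℝ × ℝ)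
    ((Pi.single b 1 : Fin d → ℝ), 0, 0) ((0 : Fin d → ℝ), 1, 0)
  show fderiv ℝ (fun q => fderiv ℝ (Phia X a) q ((Pi.single b 1 : Fin d → ℝ), 0, 0)) (x,t,t)
      ((0 : Fin d → ℝ), 1, 0) = _
  rw [hswap]
  have hdiff : DifferentiableAt ℝ (fun q => fderiv ℝ (Phia X a) q ((0 : Fin d → ℝ), 1, 0))
      (x, t, t) :=
    ((((contDiff_Phia hX a).fderiv_right (by simp)).clm_apply contDiff_const).differentiable
      (n := (⊤ : ℕ∞)) (by simp)).differentiableAt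
  refine curve_fderiv hdiff (c := fun ε : ℝ => (x + ε • (Pi.single b 1 : Fin d → ℝ), t, t)) (t₀ := 0)
    ((hasDerivAt_line x (Pi.single b 1 : Fin d → ℝ) 0).prodMk
      ((hasDerivAt_const 0 t).prodMk (hasDerivAt_const 0 t))) (by simp) ?_
  have h1 : (fun ε : ℝ => fderiv ℝ (Phia X a) (x + ε • (Pi.single b 1 : Fin d → ℝ), t, t) ((0:Fin d → ℝ),1,0))
      = fun ε : ℝ => -(u (x + ε • (Pi.single b 1 : Fin d → ℝ)) t a) := by
    funext ε; rw [fderiv_Phia_diag_e1 hX hX0 hXode]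
  rw [h1]
  exact (hasDerivAt_comp_line (((contDiff_ua hu a t).differentiable (n := (⊤ : ℕ∞)) (by simp)).differentiableAt)).neg


/-- diagonal-direction derivative of `Ua` on the diagonal. -/
lemma fderiv_Ua_diag_dir (hu : ContDiff ℝ (⊤ : ℕ∞) (fun q : (Fin d → ℝ) × ℝ => u q.1 q.2))
    (hX : ContDiff ℝ (⊤ : ℕ∞) (fun q : (Fin d → ℝ) × ℝ × ℝ => X q.1 q.2.1 q.2.2))
    (hX0 : ∀ x t, X x t t = x) (a : Fin d) (z : Fin d → ℝ) (s : ℝ) (y : Fin d → ℝ) (c : ℝ) :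
    fderiv ℝ (Ua u X a) (z, s, s) (y, c, c) = fderiv ℝ (U2a u a) (z, s) (y, c) := by
  refine curve_fderiv (((contDiff_Ua hu hX a).differentiable (n := (⊤ : ℕ∞)) (by simp)).differentiableAt)
    (c := fun ε : ℝ => (z + ε • y, s + ε * c, s + ε * c)) (t₀ := 0)
    ((hasDerivAt_line z y 0).prodMk
      ((hasDerivAt_affine s c 0).prodMk (hasDerivAt_affine s c 0))) (by simp) ?_
  have h1 : (fun ε : ℝ => Ua u X a (z + ε • y, s + ε * c, s + ε * c))
      = fun ε : ℝ => U2a u a (z + ε • y, s + ε * c) := by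
    funext ε; show u (X _ _ _) _ a = _; rw [hX0]; rfl
  rw [h1]
  have hf : HasFDerivAt (U2a u a) (fderiv ℝ (U2a u a) (z, s))
      ((fun ε : ℝ => (z + ε • y, s + ε * c)) 0) := by
    simpa using (((contDiff_U2a hu a).differentiable (n := (⊤ : ℕ∞)) (by simp)).differentiableAt
      (x := ((z, s) : (Fin d → ℝ) × ℝ))).hasFDerivAt
  exact hf.comp_hasDerivAt 0 ((hasDerivAt_line z y 0).prodMk (hasDerivAt_affine s c 0))

/-- `t₂`-derivative of `Ua` on the diagonal. -/
lemma fderiv_Ua_diag_e2 (hu : ContDiff ℝ (⊤ : ℕ∞) (fun q : (Fin d → ℝ) × ℝ => u q.1 q.2))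
    (hX : ContDiff ℝ (⊤ : ℕ∞) (fun q : (Fin d → ℝ) × ℝ × ℝ => X q.1 q.2.1 q.2.2))
    (hX0 : ∀ x t, X x t t = x)
    (hXode : ∀ x t s, HasDerivAt (fun s' => X x t s') (u (X x t s) s) s)
    (a : Fin d) (z : Fin d → ℝ) (s : ℝ) :
    fderiv ℝ (Ua u X a) (z, s, s) ((0 : Fin d → ℝ), 0, 1)
      = fderiv ℝ (U2a u a) (z, s) (u z s, 1) := by
  refine curve_fderiv (((contDiff_Ua hu hX a).differentiable (n := (⊤ : ℕ∞)) (by simp)).differentiableAt)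
    (c := fun r : ℝ => (z, s, r)) (t₀ := s)
    ((hasDerivAt_const _ z).prodMk ((hasDerivAt_const _ s).prodMk (hasDerivAt_id _))) rfl ?_
  have hζ : HasDerivAt (fun r : ℝ => ((X z s r, r) : (Fin d → ℝ) × ℝ)) (u (X z s s) s, 1) s :=
    (hXode z s s).prodMk (hasDerivAt_id s)
  have hf : HasFDerivAt (U2a u a) (fderiv ℝ (U2a u a) (z, s)) (X z s s, s) := by
    rw [hX0 z s]
    exact (((contDiff_U2a hu a).differentiable (n := (⊤ : ℕ∞)) (by simp)).differentiableAt).hasFDerivAt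
  have h2 := HasFDerivAt.comp_hasDerivAt
    (f := fun r : ℝ => ((X z s r, r) : (Fin d → ℝ) × ℝ)) s hf hζ
  rw [hX0] at h2
  exact h2

/-- swapping the `t₂`- and spatial derivatives of the flow. -/
lemma fab_e2_eq (hu : ContDiff ℝ (⊤ : ℕ∞) (fun q : (Fin d → ℝ) × ℝ => u q.1 q.2))
    (hX : ContDiff ℝ (⊤ : ℕ∞) (fun q : (Fin d → ℝ) × ℝ × ℝ => X q.1 q.2.1 q.2.2))
    (hXode : ∀ x t s, HasDerivAt (fun s' => X x t s') (u (X x t s) s) s) (a b : Fin d) :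
    (fun q => fderiv ℝ (fab X a b) q ((0 : Fin d → ℝ), 0, 1))
      = fun q => fderiv ℝ (Ua u X a) q ((Pi.single b 1 : Fin d → ℝ), 0, 0) := by
  funext q
  have h1 : fderiv ℝ (fun q' => fderiv ℝ (Phia X a) q' ((Pi.single b 1 : Fin d → ℝ), 0, 0)) q
        ((0 : Fin d → ℝ), 0, 1)
      = fderiv ℝ (fun q' => fderiv ℝ (Phia X a) q' ((0 : Fin d → ℝ), 0, 1)) q
        ((Pi.single b 1 : Fin d → ℝ), 0, 0) := swap_fderiv (contDiff_Phia hX a) q _ _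
  have h2 : (fun q' => fderiv ℝ (Phia X a) q' ((0 : Fin d → ℝ), 0, 1)) = Ua u X a := by
    funext q'; exact fderiv_Phia_e2 hX hXode a q'
  show fderiv ℝ (fun q' => fderiv ℝ (Phia X a) q' ((Pi.single b 1 : Fin d → ℝ), 0, 0)) q _ = _
  rw [h1, h2]

/-- value of the first `τ`-derivative at `τ = 0`. -/
lemma G1_zero (hu : ContDiff ℝ (⊤ : ℕ∞) (fun q : (Fin d → ℝ) × ℝ => u q.1 q.2))
    (hX : ContDiff ℝ (⊤ : ℕ∞) (fun q : (Fin d → ℝ) × ℝ × ℝ => X q.1 q.2.1 q.2.2))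
    (hX0 : ∀ x t, X x t t = x)
    (hXode : ∀ x t s, HasDerivAt (fun s' => X x t s') (u (X x t s) s) s)
    (a b : Fin d) (x : Fin d → ℝ) (t : ℝ) :
    fderiv ℝ (fab X a b) (x, t, t) (-(u x t), -1, 0)
      = fderiv ℝ (fun z => u z t a) x (Pi.single b 1) := by
  have hvec : ((-(u x t) : Fin d → ℝ), (-1 : ℝ), (0 : ℝ))
      = (-(u x t), (0:ℝ), (0:ℝ)) - ((0 : Fin d → ℝ), (1:ℝ), (0:ℝ)) := by
    simp [Prod.ext_iff]
  rw [hvec, map_sub, fderiv_fab_diag_dir hX hX0 a b x t (-(u x t)) 0,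
    fderiv_fab_diag_e1 hu hX hX0 hXode a b x t]
  simp

/-- reduction of mixed second derivatives of `fab` with one `t₂`-slot to `Ua`. -/
lemma Dfab_we2 (hu : ContDiff ℝ (⊤ : ℕ∞) (fun q : (Fin d → ℝ) × ℝ => u q.1 q.2))
    (hX : ContDiff ℝ (⊤ : ℕ∞) (fun q : (Fin d → ℝ) × ℝ × ℝ => X q.1 q.2.1 q.2.2))
    (hXode : ∀ x t s, HasDerivAt (fun s' => X x t s') (u (X x t s) s) s)
    (a b : Fin d) (p : (Fin d → ℝ) × ℝ × ℝ) (w : (Fin d → ℝ) × ℝ × ℝ) :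
    fderiv ℝ (fderiv ℝ (fab X a b)) p w ((0 : Fin d → ℝ), 0, 1)
      = fderiv ℝ (fun q => fderiv ℝ (Ua u X a) q w) p ((Pi.single b 1 : Fin d → ℝ), 0, 0) := by
  rw [← ev_fderiv (contDiff_fab hX a b), fab_e2_eq hu hX hXode a b,
    swap_fderiv (contDiff_Ua hu hX a)]

/-- C4: the quadratic term is the matrix square. -/
lemma quad_term (hu : ContDiff ℝ (⊤ : ℕ∞) (fun q : (Fin d → ℝ) × ℝ => u q.1 q.2))
    (a b : Fin d) (x : Fin d → ℝ) (t : ℝ) :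
    fderiv ℝ (U2a u a) (x, t) (fderiv ℝ (fun z => u z t) x (Pi.single b 1), 0)
      = (gradU u x t * gradU u x t) a b := by
  set y : Fin d → ℝ := fderiv ℝ (fun z => u z t) x (Pi.single b 1) with hy
  rw [fderiv_U2a_sp hu a x t y, Matrix.mul_apply]
  have hyc : ∀ c : Fin d, y c = fderiv ℝ (fun z => u z t c) x (Pi.single b 1) := by
    intro c
    have hproj := ((ContinuousLinearMap.proj (R := ℝ) (φ := fun _ : Fin d => ℝ)
      c).hasFDerivAt.comp x (((contDiff_uslice hu t).differentiable
        (n := (⊤ : ℕ∞)) (by simp)).differentiableAt).hasFDerivAt).fderiv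
    rw [show (fun z => u z t c) = (ContinuousLinearMap.proj (R := ℝ)
      (φ := fun _ : Fin d => ℝ) c) ∘ (fun z => u z t) from rfl, hproj]
    rfl
  have hysum : y = ∑ c : Fin d, y c • (Pi.single c 1 : Fin d → ℝ) := by
    funext j
    rw [Finset.sum_apply]
    simp [Pi.single_apply]
  rw [hysum, map_sum]
  refine Finset.sum_congr rfl fun c _ => ?_
  rw [_root_.map_smul, smul_eq_mul, hyc c]
  show fderiv ℝ (fun z => u z t c) x (Pi.single b 1)
      * fderiv ℝ (fun z' => u z' t a) x (Pi.single c 1) = _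
  rw [mul_comm]
  rfl

/-- C5: the frozen convective term. -/
lemma conv_term (hu : ContDiff ℝ (⊤ : ℕ∞) (fun q : (Fin d → ℝ) × ℝ => u q.1 q.2))
    (a b : Fin d) (x : Fin d → ℝ) (t : ℝ) :
    fderiv ℝ (fun z => fderiv ℝ (U2a u a) (z, t) (u x t, 0)) x (Pi.single b 1)
      = fderiv ℝ (fun z => gradU u z t a b) x (u x t) := by
  have h : (fun z => fderiv ℝ (U2a u a) (z, t) ((u x t : Fin d → ℝ), (0:ℝ)))
      = fun z => fderiv ℝ (fun z' => u z' t a) z (u x t) := by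
    funext z; exact fderiv_U2a_sp hu a z t (u x t)
  rw [h, swap_fderiv (contDiff_ua hu a t) x (u x t) (Pi.single b 1)]
  rfl

/-- C6: the time term. -/
lemma time_term (hu : ContDiff ℝ (⊤ : ℕ∞) (fun q : (Fin d → ℝ) × ℝ => u q.1 q.2))
    (a b : Fin d) (x : Fin d → ℝ) (t : ℝ) :
    fderiv ℝ (fun z => fderiv ℝ (U2a u a) (z, t) ((0 : Fin d → ℝ), 1)) x (Pi.single b 1)
      = deriv (fun s => gradU u x s a b) t := by
  have hdF : ContDiff ℝ (⊤ : ℕ∞) (fun p : (Fin d → ℝ) × ℝ => fderiv ℝ (U2a u a) p) :=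
    (contDiff_U2a hu a).fderiv_right (by simp)
  have hdiff1 : DifferentiableAt ℝ (fun z => fderiv ℝ (U2a u a) (z, t) ((0 : Fin d → ℝ), 1)) x :=
    ((((hdF.comp (contDiff_id.prodMk contDiff_const)).clm_apply
      contDiff_const).differentiable (n := (⊤ : ℕ∞)) (by simp))).differentiableAt
  have h6a : fderiv ℝ (fun p : (Fin d → ℝ) × ℝ => fderiv ℝ (U2a u a) p ((0 : Fin d → ℝ), 1))
      (x, t) ((Pi.single b 1 : Fin d → ℝ), 0)
      = fderiv ℝ (fun z => fderiv ℝ (U2a u a) (z, t) ((0 : Fin d → ℝ), 1)) x (Pi.single b 1) := by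
    refine curve_fderiv (((hdF.clm_apply contDiff_const).differentiable (n := (⊤ : ℕ∞)) (by simp)).differentiableAt)
      (c := fun ε : ℝ => (x + ε • (Pi.single b 1 : Fin d → ℝ), t)) (t₀ := 0)
      ((hasDerivAt_line x (Pi.single b 1 : Fin d → ℝ) 0).prodMk (hasDerivAt_const 0 t))
      (by simp) ?_
    exact hasDerivAt_comp_line hdiff1
  rw [← h6a, swap_fderiv (contDiff_U2a hu a) (x, t) ((0 : Fin d → ℝ), 1)
    ((Pi.single b 1 : Fin d → ℝ), 0)]
  have hφ : DifferentiableAt ℝ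
      (fun s : ℝ => fderiv ℝ (U2a u a) (x, s) ((Pi.single b 1 : Fin d → ℝ), 0)) t :=
    ((((hdF.comp (contDiff_const.prodMk contDiff_id)).clm_apply
      contDiff_const).differentiable (n := (⊤ : ℕ∞)) (by simp))).differentiableAt
  have h6c : fderiv ℝ (fun p : (Fin d → ℝ) × ℝ =>
        fderiv ℝ (U2a u a) p ((Pi.single b 1 : Fin d → ℝ), 0)) (x, t) ((0 : Fin d → ℝ), 1)
      = deriv (fun s : ℝ => fderiv ℝ (U2a u a) (x, s) ((Pi.single b 1 : Fin d → ℝ), 0)) t := by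
    refine curve_fderiv (((hdF.clm_apply contDiff_const).differentiable (n := (⊤ : ℕ∞)) (by simp)).differentiableAt)
      (c := fun s : ℝ => ((x : Fin d → ℝ), s)) (t₀ := t)
      ((hasDerivAt_const _ x).prodMk (hasDerivAt_id _)) rfl ?_
    exact hφ.hasDerivAt
  rw [h6c]
  have h6d : (fun s : ℝ => fderiv ℝ (U2a u a) (x, s) ((Pi.single b 1 : Fin d → ℝ), 0))
      = fun s => gradU u x s a b := by
    funext s; rw [fderiv_U2a_sp hu a x s (Pi.single b 1)]; rfl
  rw [h6d]

/-- value of the second `τ`-derivative at `τ = 0`. -/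
lemma G2_zero (hu : ContDiff ℝ (⊤ : ℕ∞) (fun q : (Fin d → ℝ) × ℝ => u q.1 q.2))
    (hX : ContDiff ℝ (⊤ : ℕ∞) (fun q : (Fin d → ℝ) × ℝ × ℝ => X q.1 q.2.1 q.2.2))
    (hX0 : ∀ x t, X x t t = x)
    (hXode : ∀ x t s, HasDerivAt (fun s' => X x t s') (u (X x t s) s) s)
    (a b : Fin d) (x : Fin d → ℝ) (t : ℝ) (m : Fin d → ℝ) :
    fderiv ℝ (fderiv ℝ (fab X a b)) (x, t, t) (-(u x t), -1, 0) (-(u x t), -1, 0)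
      + fderiv ℝ (fab X a b) (x, t, t) (m, 0, 0) = Umat u x t a b := by
  have hterm2 : fderiv ℝ (fab X a b) (x, t, t) (m, 0, 0) = 0 :=
    fderiv_fab_diag_dir hX hX0 a b x t m 0
  have hw : ((-(u x t) : Fin d → ℝ), (-1 : ℝ), (0 : ℝ))
      = ((-(u x t) : Fin d → ℝ), (-1 : ℝ), (-1 : ℝ)) + ((0 : Fin d → ℝ), (0:ℝ), (1:ℝ)) := by
    simp [Prod.ext_iff]
  set σ : (Fin d → ℝ) × ℝ × ℝ := ((-(u x t) : Fin d → ℝ), (-1 : ℝ), (-1 : ℝ)) with hσ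
  set e₂ : (Fin d → ℝ) × ℝ × ℝ := ((0 : Fin d → ℝ), (0:ℝ), (1:ℝ)) with he₂
  rw [hterm2, add_zero, hw, map_add, map_add, ContinuousLinearMap.add_apply, ContinuousLinearMap.add_apply]
  -- values
  have hσσ : fderiv ℝ (fderiv ℝ (fab X a b)) (x, t, t) σ σ = 0 := by
    rw [← ev_fderiv (contDiff_fab hX a b)]
    exact fderiv2_fab_diag hX hX0 a b x t (-(u x t)) (-(u x t)) (-1) (-1)
  have hsym : fderiv ℝ (fderiv ℝ (fab X a b)) (x, t, t) e₂ σ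
      = fderiv ℝ (fderiv ℝ (fab X a b)) (x, t, t) σ e₂ :=
    ((contDiff_fab hX a b).contDiffAt.isSymmSndFDerivAt (by rw [minSmoothness_of_isRCLikeNormedField]; exact WithTop.coe_le_coe.2 le_top)) e₂ σ
  -- differentiability of the slice maps
  have hdF : ContDiff ℝ (⊤ : ℕ∞) (fun p : (Fin d → ℝ) × ℝ => fderiv ℝ (U2a u a) p) :=
    (contDiff_U2a hu a).fderiv_right (by simp)
  have hpsi : ∀ v : (Fin d → ℝ) × ℝ,
      ContDiff ℝ (⊤ : ℕ∞) (fun z => fderiv ℝ (U2a u a) (z, t) v) := fun v =>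
    ((hdF.comp (contDiff_id.prodMk contDiff_const)).clm_apply contDiff_const)
  have hUadiff : ∀ w : (Fin d → ℝ) × ℝ × ℝ,
      DifferentiableAt ℝ (fun q => fderiv ℝ (Ua u X a) q w) ((x, t, t) : (Fin d → ℝ) × ℝ × ℝ) :=
    fun w => (((((contDiff_Ua hu hX a).fderiv_right (by simp)).clm_apply
      contDiff_const)).differentiable (n := (⊤ : ℕ∞)) (by simp)).differentiableAt
  -- cross term
  have hσe₂ : fderiv ℝ (fderiv ℝ (fab X a b)) (x, t, t) σ e₂
      = fderiv ℝ (fun z => fderiv ℝ (U2a u a) (z, t) (-(u x t), -1)) x (Pi.single b 1) := by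
    rw [Dfab_we2 hu hX hXode a b ((x, t, t) : (Fin d → ℝ) × ℝ × ℝ) σ]
    refine curve_fderiv (hUadiff σ)
      (c := fun ε : ℝ => (x + ε • (Pi.single b 1 : Fin d → ℝ), t, t)) (t₀ := 0)
      ((hasDerivAt_line x (Pi.single b 1 : Fin d → ℝ) 0).prodMk
        ((hasDerivAt_const 0 t).prodMk (hasDerivAt_const 0 t))) (by simp) ?_
    have h1 : (fun ε : ℝ => fderiv ℝ (Ua u X a) (x + ε • (Pi.single b 1 : Fin d → ℝ), t, t) σ)
        = fun ε : ℝ => (fun z => fderiv ℝ (U2a u a) (z, t) (-(u x t), -1))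
            (x + ε • (Pi.single b 1 : Fin d → ℝ)) := by
      funext ε; exact fderiv_Ua_diag_dir hu hX hX0 a _ t (-(u x t)) (-1)
    rw [h1]
    exact hasDerivAt_comp_line (((hpsi _).differentiable (n := (⊤ : ℕ∞)) (by simp)).differentiableAt)
  -- e₂ e₂ term
  have he2e2 : fderiv ℝ (fderiv ℝ (fab X a b)) (x, t, t) e₂ e₂
      = fderiv ℝ (fun z => fderiv ℝ (U2a u a) (z, t) (u z t, 1)) x (Pi.single b 1) := by
    rw [Dfab_we2 hu hX hXode a b ((x, t, t) : (Fin d → ℝ) × ℝ × ℝ) e₂]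
    refine curve_fderiv (hUadiff e₂)
      (c := fun ε : ℝ => (x + ε • (Pi.single b 1 : Fin d → ℝ), t, t)) (t₀ := 0)
      ((hasDerivAt_line x (Pi.single b 1 : Fin d → ℝ) 0).prodMk
        ((hasDerivAt_const 0 t).prodMk (hasDerivAt_const 0 t))) (by simp) ?_
    have h1 : (fun ε : ℝ => fderiv ℝ (Ua u X a) (x + ε • (Pi.single b 1 : Fin d → ℝ), t, t) e₂)
        = fun ε : ℝ => (fun z => fderiv ℝ (U2a u a) (z, t) (u z t, 1))
            (x + ε • (Pi.single b 1 : Fin d → ℝ)) := by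
      funext ε; exact fderiv_Ua_diag_e2 hu hX hX0 hXode a _ t
    rw [h1]
    have hdiffe : DifferentiableAt ℝ (fun z => fderiv ℝ (U2a u a) (z, t) (u z t, 1)) x := by
      have : ContDiff ℝ (⊤ : ℕ∞) (fun z => fderiv ℝ (U2a u a) (z, t) ((u z t : Fin d → ℝ), (1:ℝ))) :=
        (hdF.comp (contDiff_id.prodMk contDiff_const)).clm_apply
          ((contDiff_uslice hu t).prodMk contDiff_const)
      exact (this.differentiable (n := (⊤ : ℕ∞)) (by simp)).differentiableAt
    exact hasDerivAt_comp_line hdiffe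
  rw [hσσ, hsym, hσe₂, he2e2]
  -- split the linear slots
  have hsplit1 : (fun z => fderiv ℝ (U2a u a) (z, t) ((-(u x t) : Fin d → ℝ), (-1:ℝ)))
      = fun z => -(fderiv ℝ (U2a u a) (z, t) ((u x t : Fin d → ℝ), (0:ℝ)))
          - fderiv ℝ (U2a u a) (z, t) ((0 : Fin d → ℝ), (1:ℝ)) := by
    funext z
    have hv : ((-(u x t) : Fin d → ℝ), (-1:ℝ))
        = -(((u x t : Fin d → ℝ), (0:ℝ)) : (Fin d → ℝ) × ℝ) - ((0 : Fin d → ℝ), (1:ℝ)) := by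
      simp [Prod.ext_iff]
    rw [hv, map_sub, map_neg]
  have hsplit2 : (fun z => fderiv ℝ (U2a u a) (z, t) ((u z t : Fin d → ℝ), (1:ℝ)))
      = fun z => fderiv ℝ (U2a u a) (z, t) ((u z t : Fin d → ℝ), (0:ℝ))
          + fderiv ℝ (U2a u a) (z, t) ((0 : Fin d → ℝ), (1:ℝ)) := by
    funext z
    rw [show ((u z t : Fin d → ℝ), (1:ℝ)) = (((u z t : Fin d → ℝ), (0:ℝ)) : (Fin d → ℝ) × ℝ)
      + ((0 : Fin d → ℝ), (1:ℝ)) by simp [Prod.ext_iff], map_add]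
  rw [hsplit1, hsplit2]
  set F : (Fin d → ℝ) → ℝ := fun z => fderiv ℝ (U2a u a) (z, t) ((u x t : Fin d → ℝ), (0:ℝ))
    with hF
  set G : (Fin d → ℝ) → ℝ := fun z => fderiv ℝ (U2a u a) (z, t) ((0 : Fin d → ℝ), (1:ℝ))
    with hG
  set D : (Fin d → ℝ) → ℝ := fun z => fderiv ℝ (U2a u a) (z, t) ((u z t : Fin d → ℝ), (0:ℝ))
    with hD
  have hFd : DifferentiableAt ℝ F x := (((hpsi _)).differentiable (n := (⊤ : ℕ∞)) (by simp)).differentiableAt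
  have hGd : DifferentiableAt ℝ G x := (((hpsi _)).differentiable (n := (⊤ : ℕ∞)) (by simp)).differentiableAt
  have hDd : DifferentiableAt ℝ D x := by
    have : ContDiff ℝ (⊤ : ℕ∞) D :=
      (hdF.comp (contDiff_id.prodMk contDiff_const)).clm_apply
        ((contDiff_uslice hu t).prodMk contDiff_const)
    exact (this.differentiable (n := (⊤ : ℕ∞)) (by simp)).differentiableAt
  have hE1 : fderiv ℝ (fun z => -(F z) - G z) x (Pi.single b 1)
      = -(fderiv ℝ F x (Pi.single b 1)) - fderiv ℝ G x (Pi.single b 1) := by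
    rw [fderiv_fun_sub (f := fun z => -F z) hFd.neg hGd, fderiv_fun_neg]
    simp
  have hE2 : fderiv ℝ (fun z => D z + G z) x (Pi.single b 1)
      = fderiv ℝ D x (Pi.single b 1) + fderiv ℝ G x (Pi.single b 1) := by
    rw [fderiv_fun_add hDd hGd]; simp
  rw [hE1, hE2]
  -- C3 : D-derivative equals F-derivative plus the quadratic term
  have hC3 : fderiv ℝ D x (Pi.single b 1) = fderiv ℝ F x (Pi.single b 1)
      + fderiv ℝ (U2a u a) (x, t) (fderiv ℝ (fun z => u z t) x (Pi.single b 1), 0) := by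
    have hc : HasFDerivAt (fun z : Fin d → ℝ => fderiv ℝ (U2a u a) (z, t))
        (fderiv ℝ (fun z : Fin d → ℝ => fderiv ℝ (U2a u a) (z, t)) x) x :=
      (((hdF.comp (contDiff_id.prodMk contDiff_const)).differentiable
        (n := (⊤ : ℕ∞)) (by simp)).differentiableAt).hasFDerivAt
    have hgd : HasFDerivAt (fun z : Fin d → ℝ => ((u z t : Fin d → ℝ), (0:ℝ)))
        ((fderiv ℝ (fun z => u z t) x).prod 0) x :=
      ((((contDiff_uslice hu t).differentiable (n := (⊤ : ℕ∞)) (by simp)).differentiableAt).hasFDerivAt).prodMk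
        (hasFDerivAt_const 0 x)
    have hd1 := (hc.clm_apply hgd).fderiv
    have ha1 := (hc.clm_apply (hasFDerivAt_const (((u x t : Fin d → ℝ), (0:ℝ))
      : (Fin d → ℝ) × ℝ) x)).fderiv
    rw [hD, hd1, hF, ha1]
    simp [ContinuousLinearMap.add_apply, ContinuousLinearMap.comp_apply,
      ContinuousLinearMap.flip_apply, ContinuousLinearMap.prod_apply]
    ring
  rw [hC3, quad_term hu a b x t, conv_term hu a b x t, time_term hu a b x t]
  -- final algebra
  show (0:ℝ) + (-(fderiv ℝ (fun z => gradU u z t a b) x (u x t))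
      - deriv (fun s => gradU u x s a b) t)
    + ((-(fderiv ℝ (fun z => gradU u z t a b) x (u x t)) - deriv (fun s => gradU u x s a b) t)
      + ((fderiv ℝ (fun z => gradU u z t a b) x (u x t)
          + (gradU u x t * gradU u x t) a b) + deriv (fun s => gradU u x s a b) t))
    = Umat u x t a b
  rw [Umat, Matrix.sub_apply, Matrix.of_apply]
  ring

/-- the moving base point `(X x t (t-τ), t-τ, t)` as a function of `p = (x,t,τ)`. -/
def Xi (X : (Fin d → ℝ) → ℝ → ℝ → (Fin d → ℝ)) :
    (Fin d → ℝ) × ℝ × ℝ → (Fin d → ℝ) × ℝ × ℝ :=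
  fun p => (X p.1 p.2.1 (p.2.1 - p.2.2), p.2.1 - p.2.2, p.2.1)

def eta (X : (Fin d → ℝ) → ℝ → ℝ → (Fin d → ℝ)) :
    (Fin d → ℝ) × ℝ × ℝ → (Fin d → ℝ) × ℝ :=
  fun p => (X p.1 p.2.1 (p.2.1 - p.2.2), p.2.1 - p.2.2)

def U2 (u : (Fin d → ℝ) → ℝ → (Fin d → ℝ)) : (Fin d → ℝ) × ℝ → (Fin d → ℝ) :=
  fun q => u q.1 q.2

def eta1 (u : (Fin d → ℝ) → ℝ → (Fin d → ℝ)) (X : (Fin d → ℝ) → ℝ → ℝ → (Fin d → ℝ)) :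
    (Fin d → ℝ) × ℝ × ℝ → (Fin d → ℝ) × ℝ :=
  fun p => (-(U2 u (eta X p)), -1)

def eta2 (u : (Fin d → ℝ) → ℝ → (Fin d → ℝ)) (X : (Fin d → ℝ) → ℝ → ℝ → (Fin d → ℝ)) :
    (Fin d → ℝ) × ℝ × ℝ → (Fin d → ℝ) × ℝ :=
  fun p => (-(fderiv ℝ (U2 u) (eta X p) (eta1 u X p)), 0)

def V1 (u : (Fin d → ℝ) → ℝ → (Fin d → ℝ)) (X : (Fin d → ℝ) → ℝ → ℝ → (Fin d → ℝ)) :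
    (Fin d → ℝ) × ℝ × ℝ → (Fin d → ℝ) × ℝ × ℝ :=
  fun p => ((eta1 u X p).1, (eta1 u X p).2, 0)

def V2 (u : (Fin d → ℝ) → ℝ → (Fin d → ℝ)) (X : (Fin d → ℝ) → ℝ → ℝ → (Fin d → ℝ)) :
    (Fin d → ℝ) × ℝ × ℝ → (Fin d → ℝ) × ℝ × ℝ :=
  fun p => ((eta2 u X p).1, 0, 0)

def V3 (u : (Fin d → ℝ) → ℝ → (Fin d → ℝ)) (X : (Fin d → ℝ) → ℝ → ℝ → (Fin d → ℝ)) :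
    (Fin d → ℝ) × ℝ × ℝ → (Fin d → ℝ) × ℝ × ℝ :=
  fun p => (-(fderiv ℝ (fderiv ℝ (U2 u)) (eta X p) (eta1 u X p) (eta1 u X p)
      + fderiv ℝ (U2 u) (eta X p) (eta2 u X p)), 0, 0)

def G1 (u : (Fin d → ℝ) → ℝ → (Fin d → ℝ)) (X : (Fin d → ℝ) → ℝ → ℝ → (Fin d → ℝ))
    (a b : Fin d) : (Fin d → ℝ) × ℝ × ℝ → ℝ :=
  fun p => fderiv ℝ (fab X a b) (Xi X p) (V1 u X p)

def G2 (u : (Fin d → ℝ) → ℝ → (Fin d → ℝ)) (X : (Fin d → ℝ) → ℝ → ℝ → (Fin d → ℝ))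
    (a b : Fin d) : (Fin d → ℝ) × ℝ × ℝ → ℝ :=
  fun p => fderiv ℝ (fderiv ℝ (fab X a b)) (Xi X p) (V1 u X p) (V1 u X p)
    + fderiv ℝ (fab X a b) (Xi X p) (V2 u X p)

def G3 (u : (Fin d → ℝ) → ℝ → (Fin d → ℝ)) (X : (Fin d → ℝ) → ℝ → ℝ → (Fin d → ℝ))
    (a b : Fin d) : (Fin d → ℝ) × ℝ × ℝ → ℝ :=
  fun p =>
    ((fderiv ℝ (fderiv ℝ (fderiv ℝ (fab X a b))) (Xi X p) (V1 u X p) (V1 u X p)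
        + fderiv ℝ (fderiv ℝ (fab X a b)) (Xi X p) (V2 u X p)) (V1 u X p)
      + fderiv ℝ (fderiv ℝ (fab X a b)) (Xi X p) (V1 u X p) (V2 u X p))
    + (fderiv ℝ (fderiv ℝ (fab X a b)) (Xi X p) (V1 u X p) (V2 u X p)
      + fderiv ℝ (fab X a b) (Xi X p) (V3 u X p))

section chain

variable (hu : ContDiff ℝ (⊤ : ℕ∞) (fun q : (Fin d → ℝ) × ℝ => u q.1 q.2))
variable (hX : ContDiff ℝ (⊤ : ℕ∞) (fun q : (Fin d → ℝ) × ℝ × ℝ => X q.1 q.2.1 q.2.2))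
variable (hXode : ∀ x t s, HasDerivAt (fun s' => X x t s') (u (X x t s) s) s)
include hu hX hXode

lemma hasDerivAt_flow (x : Fin d → ℝ) (t τ : ℝ) :
    HasDerivAt (fun τ' : ℝ => X x t (t - τ')) (-(u (X x t (t - τ)) (t - τ))) τ := by
  have hs : HasDerivAt (fun τ' : ℝ => t - τ') (-1) τ := by
    simpa using (hasDerivAt_id τ).const_sub t
  have h := HasDerivAt.scomp (𝕜 := ℝ) τ (hXode x t (t - τ)) hs
  simpa [Function.comp_def] using h

lemma hasDerivAt_eta (x : Fin d → ℝ) (t τ : ℝ) :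
    HasDerivAt (fun τ' : ℝ => eta X (x, t, τ')) (eta1 u X (x, t, τ)) τ :=
  (hasDerivAt_flow hu hX hXode x t τ).prodMk (by simpa using (hasDerivAt_id τ).const_sub t)

lemma hasDerivAt_Xi (x : Fin d → ℝ) (t τ : ℝ) :
    HasDerivAt (fun τ' : ℝ => Xi X (x, t, τ')) (V1 u X (x, t, τ)) τ :=
  (hasDerivAt_flow hu hX hXode x t τ).prodMk
    ((by simpa using (hasDerivAt_id τ).const_sub t : HasDerivAt (fun τ' : ℝ => t - τ') (-1) τ).prodMk
      (hasDerivAt_const τ t))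

lemma hasDerivAt_eta1 (x : Fin d → ℝ) (t τ : ℝ) :
    HasDerivAt (fun τ' : ℝ => eta1 u X (x, t, τ')) (eta2 u X (x, t, τ)) τ := by
  refine HasDerivAt.prodMk ?_ (hasDerivAt_const τ (-1))
  have hU2 : DifferentiableAt ℝ (U2 u) (eta X (x, t, τ)) :=
    ((hu.differentiable (n := (⊤ : ℕ∞)) (by simp))).differentiableAt
  exact (hU2.hasFDerivAt.comp_hasDerivAt τ (hasDerivAt_eta hu hX hXode x t τ)).neg

lemma hasDerivAt_V1 (x : Fin d → ℝ) (t τ : ℝ) :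
    HasDerivAt (fun τ' : ℝ => V1 u X (x, t, τ')) (V2 u X (x, t, τ)) τ := by
  refine HasDerivAt.prodMk ?_ ((hasDerivAt_const τ (-1)).prodMk (hasDerivAt_const τ 0))
  exact ((hasDerivAt_eta1 hu hX hXode x t τ)).fst

lemma hasDerivAt_V2 (x : Fin d → ℝ) (t τ : ℝ) :
    HasDerivAt (fun τ' : ℝ => V2 u X (x, t, τ')) (V3 u X (x, t, τ)) τ := by
  refine HasDerivAt.prodMk ?_ ((hasDerivAt_const τ 0).prodMk (hasDerivAt_const τ 0))
  have hc : HasDerivAt (fun τ' : ℝ => fderiv ℝ (U2 u) (eta X (x, t, τ')))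
      (fderiv ℝ (fderiv ℝ (U2 u)) (eta X (x, t, τ)) (eta1 u X (x, t, τ))) τ :=
    ((((hu.fderiv_right (by simp)).differentiable (n := (⊤ : ℕ∞)) (by simp)).differentiableAt).hasFDerivAt).comp_hasDerivAt
      τ (hasDerivAt_eta hu hX hXode x t τ)
  exact (hc.clm_apply (hasDerivAt_eta1 hu hX hXode x t τ)).neg

lemma hasDerivAt_g (a b : Fin d) (x : Fin d → ℝ) (t τ : ℝ) :
    HasDerivAt (fun τ' : ℝ => fab X a b (Xi X (x, t, τ'))) (G1 u X a b (x, t, τ)) τ :=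
  ((((contDiff_fab hX a b).differentiable (n := (⊤ : ℕ∞)) (by simp)).differentiableAt).hasFDerivAt).comp_hasDerivAt
    τ (hasDerivAt_Xi hu hX hXode x t τ)

lemma hasDerivAt_G1 (a b : Fin d) (x : Fin d → ℝ) (t τ : ℝ) :
    HasDerivAt (fun τ' : ℝ => G1 u X a b (x, t, τ')) (G2 u X a b (x, t, τ)) τ := by
  have hc : HasDerivAt (fun τ' : ℝ => fderiv ℝ (fab X a b) (Xi X (x, t, τ')))
      (fderiv ℝ (fderiv ℝ (fab X a b)) (Xi X (x, t, τ)) (V1 u X (x, t, τ))) τ :=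
    ((((contDiff_fab hX a b).fderiv_right (by simp)).differentiable
      (n := (⊤ : ℕ∞)) (by simp)).differentiableAt.hasFDerivAt).comp_hasDerivAt τ
      (hasDerivAt_Xi hu hX hXode x t τ)
  exact hc.clm_apply (hasDerivAt_V1 hu hX hXode x t τ)

lemma hasDerivAt_G2 (a b : Fin d) (x : Fin d → ℝ) (t τ : ℝ) :
    HasDerivAt (fun τ' : ℝ => G2 u X a b (x, t, τ')) (G3 u X a b (x, t, τ)) τ := by
  have hΞ := hasDerivAt_Xi hu hX hXode x t τ
  have hV1 := hasDerivAt_V1 hu hX hXode x t τ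
  have hV2 := hasDerivAt_V2 hu hX hXode x t τ
  have hc2 : HasDerivAt (fun τ' : ℝ => fderiv ℝ (fderiv ℝ (fab X a b)) (Xi X (x, t, τ')))
      (fderiv ℝ (fderiv ℝ (fderiv ℝ (fab X a b))) (Xi X (x, t, τ)) (V1 u X (x, t, τ))) τ :=
    (((((contDiff_fab hX a b).fderiv_right (m := (⊤ : ℕ∞)) (by simp)).fderiv_right (m := (⊤ : ℕ∞)) (by simp)).differentiable
      (n := (⊤ : ℕ∞)) (by simp)).differentiableAt.hasFDerivAt).comp_hasDerivAt τ hΞ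
  have hc : HasDerivAt (fun τ' : ℝ => fderiv ℝ (fab X a b) (Xi X (x, t, τ')))
      (fderiv ℝ (fderiv ℝ (fab X a b)) (Xi X (x, t, τ)) (V1 u X (x, t, τ))) τ :=
    ((((contDiff_fab hX a b).fderiv_right (by simp)).differentiable
      (n := (⊤ : ℕ∞)) (by simp)).differentiableAt.hasFDerivAt).comp_hasDerivAt τ hΞ
  have hA := (hc2.clm_apply hV1).clm_apply hV1
  have hB := hc.clm_apply hV2
  exact hA.add hB

end chain

section cont

variable (hu : ContDiff ℝ (⊤ : ℕ∞) (fun q : (Fin d → ℝ) × ℝ => u q.1 q.2))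
variable (hX : ContDiff ℝ (⊤ : ℕ∞) (fun q : (Fin d → ℝ) × ℝ × ℝ => X q.1 q.2.1 q.2.2))
include hu hX

lemma continuous_G123 (a b : Fin d) :
    Continuous (G1 u X a b) ∧ Continuous (G2 u X a b) ∧ Continuous (G3 u X a b) := by
  have hXc : Continuous (fun q : (Fin d → ℝ) × ℝ × ℝ => X q.1 q.2.1 q.2.2) := hX.continuous
  have h1 : Continuous (fun p : (Fin d → ℝ) × ℝ × ℝ =>
      ((p.1, p.2.1, p.2.1 - p.2.2) : (Fin d → ℝ) × ℝ × ℝ)) := by fun_prop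
  have hsub : Continuous (fun p : (Fin d → ℝ) × ℝ × ℝ => p.2.1 - p.2.2) := by fun_prop
  have ht : Continuous (fun p : (Fin d → ℝ) × ℝ × ℝ => p.2.1) := by fun_prop
  have hXic : Continuous (Xi X) := (hXc.comp h1).prodMk (hsub.prodMk ht)
  have hetac : Continuous (eta X) := (hXc.comp h1).prodMk hsub
  have hU2c : Continuous (U2 u) := hu.continuous
  have heta1c : Continuous (eta1 u X) := ((hU2c.comp hetac).neg).prodMk continuous_const
  have hdU2c : Continuous (fderiv ℝ (U2 u)) := (hu.fderiv_right (m := (⊤ : ℕ∞)) (by simp)).continuous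
  have heta2c : Continuous (eta2 u X) :=
    (((hdU2c.comp hetac).clm_apply heta1c).neg).prodMk continuous_const
  have hV1c : Continuous (V1 u X) :=
    (heta1c.fst).prodMk ((heta1c.snd).prodMk continuous_const)
  have hV2c : Continuous (V2 u X) :=
    (heta2c.fst).prodMk (continuous_const.prodMk continuous_const)
  have hd2U2c : Continuous (fderiv ℝ (fderiv ℝ (U2 u))) :=
    ((hu.fderiv_right (m := (⊤ : ℕ∞)) (by simp)).fderiv_right (m := (⊤ : ℕ∞)) (by simp)).continuous
  have hV3c : Continuous (V3 u X) := by
    refine Continuous.prodMk ?_ (continuous_const.prodMk continuous_const)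
    exact ((((hd2U2c.comp hetac).clm_apply heta1c).clm_apply heta1c).add
      ((hdU2c.comp hetac).clm_apply heta2c)).neg
  have hf1 : Continuous (fderiv ℝ (fab X a b)) :=
    ((contDiff_fab hX a b).fderiv_right (m := (⊤ : ℕ∞)) (by simp)).continuous
  have hf2 : Continuous (fderiv ℝ (fderiv ℝ (fab X a b))) :=
    (((contDiff_fab hX a b).fderiv_right (m := (⊤ : ℕ∞)) (by simp)).fderiv_right (m := (⊤ : ℕ∞)) (by simp)).continuous
  have hf3 :=
    ((((contDiff_fab hX a b).fderiv_right (m := (⊤ : ℕ∞)) (by simp)).fderiv_right (m := (⊤ : ℕ∞))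
      (by simp)).fderiv_right (m := (⊤ : ℕ∞)) (by simp)).continuous
  refine ⟨(hf1.comp hXic).clm_apply hV1c,
    ((((hf2.comp hXic).clm_apply hV1c).clm_apply hV1c).add
      ((hf1.comp hXic).clm_apply hV2c)), ?_⟩
  exact (((((((hf3.comp hXic).clm_apply hV1c).clm_apply hV1c).add
      ((hf2.comp hXic).clm_apply hV2c)).clm_apply hV1c).add
      (((hf2.comp hXic).clm_apply hV1c).clm_apply hV2c)).add
    (((((hf2.comp hXic).clm_apply hV1c).clm_apply hV2c)).add
      ((hf1.comp hXic).clm_apply hV3c)))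

end cont

end
end DGTaux

open DGTaux

/-- Second-order Taylor expansion of the deformation gradient:
for `k = 1, 2`, `L(x,t; t−kΔt, t) = I + kΔt(∇u)(x,t) + ((kΔt)²/2) U(x,t) + O(Δt³)`,
uniformly in `x ∈ Ω̄` and `t ∈ [kΔt, T]`. -/
theorem deformation_gradient_taylor (d : ℕ) (T : ℝ) (hT : 0 < T)
    (Ω : Set (Fin d → ℝ)) (hΩ : Bornology.IsBounded Ω)
    (u : (Fin d → ℝ) → ℝ → (Fin d → ℝ))
    (X : (Fin d → ℝ) → ℝ → ℝ → (Fin d → ℝ))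
    (hu : ContDiff ℝ (⊤ : ℕ∞) (fun q : (Fin d → ℝ) × ℝ => u q.1 q.2))
    (hu0 : ∀ t : ℝ, ∀ x ∈ frontier Ω, u x t = 0)
    (hX : ContDiff ℝ (⊤ : ℕ∞) (fun q : (Fin d → ℝ) × ℝ × ℝ => X q.1 q.2.1 q.2.2))
    (hX0 : ∀ x t, X x t t = x)
    (hXode : ∀ x t s, HasDerivAt (fun s' => X x t s') (u (X x t s) s) s)
    (hXin : ∀ x ∈ closure Ω, ∀ t ∈ Set.Icc (0:ℝ) T, ∀ s ∈ Set.Icc (0:ℝ) T,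
      X x t s ∈ closure Ω)
    (L : (Fin d → ℝ) → ℝ → ℝ → ℝ → Matrix (Fin d) (Fin d) ℝ)
    (hL : ∀ x t t₁ t₂, L x t t₁ t₂ =
      Matrix.of fun i j => fderiv ℝ (fun z => X z t₁ t₂ i) (X x t t₁) (Pi.single j 1))
    (Ku : ℝ)
    (hKu : ∀ t ∈ Set.Icc (0:ℝ) T, ∀ x ∈ closure Ω,
      ‖u x t‖ ≤ Ku ∧ ‖fderiv ℝ (fun z => u z t) x‖ ≤ Ku) :
    ∃ C > (0 : ℝ), ∀ (k : ℕ), (k = 1 ∨ k = 2) → ∀ Δt : ℝ, 0 < Δt →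
      Δt * Ku ≤ 1 / 8 →
      ∀ x ∈ closure Ω, ∀ t ∈ Set.Icc ((k : ℝ) * Δt) T, ∀ a b : Fin d,
        |L x t (t - (k : ℝ) * Δt) t a b -
          ((1 : Matrix (Fin d) (Fin d) ℝ) + ((k : ℝ) * Δt) • gradU u x t
            + (((k : ℝ) * Δt) ^ 2 / 2) • Umat u x t) a b|
          ≤ C * Δt ^ 3 := by
  classical
  set K : Set ((Fin d → ℝ) × ℝ × ℝ) :=
    (closure Ω) ×ˢ ((Set.Icc (0:ℝ) T) ×ˢ (Set.Icc (0:ℝ) T)) with hKdef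
  have hKcomp : IsCompact K :=
    (hΩ.isCompact_closure).prod (isCompact_Icc.prod isCompact_Icc)
  have hM : ∀ a b : Fin d, ∃ M : ℝ, ∀ p ∈ K, ‖G3 u X a b p‖ ≤ M := fun a b =>
    hKcomp.exists_bound_of_continuousOn ((continuous_G123 hu hX a b).2.2).continuousOn
  choose M hMspec using hM
  set S : ℝ := ∑ a : Fin d, ∑ b : Fin d, |M a b| with hSdef
  have hSnonneg : 0 ≤ S := Finset.sum_nonneg fun a _ =>
    Finset.sum_nonneg fun b _ => abs_nonneg _
  refine ⟨1 + (4/3) * S, by positivity, ?_⟩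
  intro k hk Δt hΔt _ x hx t ht a b
  have hkle : (k : ℝ) ≤ 2 := by rcases hk with rfl | rfl <;> norm_num
  have hkpos : (0 : ℝ) < k := by rcases hk with rfl | rfl <;> norm_num
  set tk : ℝ := (k : ℝ) * Δt with htkdef
  have htkpos : 0 < tk := mul_pos hkpos hΔt
  have htkt : tk ≤ t := ht.1
  have htT : t ≤ T := ht.2
  have h0t : 0 ≤ t := htkpos.le.trans htkt
  -- Taylor estimate
  have key := taylor_bound (g := fun τ' => fab X a b (Xi X (x, t, τ')))
    (g1 := fun σ => G1 u X a b (x, t, σ)) (g2 := fun σ => G2 u X a b (x, t, σ))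
    (g3 := fun σ => G3 u X a b (x, t, σ)) (M := M a b) (τ := tk) htkpos.le
    (fun σ => hasDerivAt_g hu hX hXode a b x t σ)
    (fun σ => hasDerivAt_G1 hu hX hXode a b x t σ)
    (fun σ => hasDerivAt_G2 hu hX hXode a b x t σ)
    (((continuous_G123 hu hX a b).1).comp (by fun_prop))
    (((continuous_G123 hu hX a b).2.1).comp (by fun_prop))
    (((continuous_G123 hu hX a b).2.2).comp (by fun_prop))
    (by
      intro σ hσ
      have hp : ((x, t, σ) : (Fin d → ℝ) × ℝ × ℝ) ∈ K := by
        refine Set.mem_prod.2 ⟨hx, Set.mem_prod.2 ⟨⟨h0t, htT⟩, ⟨hσ.1, ?_⟩⟩⟩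
        exact hσ.2.trans (htkt.trans htT)
      simpa [Real.norm_eq_abs] using hMspec a b _ hp)
  -- identification of the Taylor data
  have hXi0 : Xi X ((x, t, 0) : (Fin d → ℝ) × ℝ × ℝ) = (x, t, t) := by
    simp [Xi, hX0]
  have hV10 : V1 u X ((x, t, 0) : (Fin d → ℝ) × ℝ × ℝ) = (-(u x t), -1, 0) := by
    simp [V1, eta1, eta, U2, hX0]
  have hg0 : fab X a b (Xi X (x, t, 0)) = (1 : Matrix (Fin d) (Fin d) ℝ) a b := by
    rw [hXi0, fab_diag hX hX0 a b x t, Matrix.one_apply, Pi.single_apply]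
  have hg1 : G1 u X a b (x, t, 0) = gradU u x t a b := by
    show fderiv ℝ (fab X a b) (Xi X (x, t, 0)) (V1 u X (x, t, 0)) = _
    rw [hXi0, hV10, G1_zero hu hX hX0 hXode a b x t]
    rfl
  have hg2 : G2 u X a b (x, t, 0) = Umat u x t a b := by
    show fderiv ℝ (fderiv ℝ (fab X a b)) (Xi X (x, t, 0)) (V1 u X (x, t, 0)) (V1 u X (x, t, 0))
        + fderiv ℝ (fab X a b) (Xi X (x, t, 0)) (V2 u X (x, t, 0)) = _
    rw [hXi0, hV10]
    exact G2_zero hu hX hX0 hXode a b x t _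
  have hgτ : fab X a b (Xi X (x, t, tk)) = L x t (t - tk) t a b := by
    rw [hL]
    show fderiv ℝ (Phia X a) (X x t (t - tk), t - tk, t)
        ((Pi.single b 1 : Fin d → ℝ), 0, 0) = _
    rw [fderiv_Phia_sp hX a (X x t (t - tk)) (t - tk) t (Pi.single b 1)]
    rfl
  have heq : L x t (t - tk) t a b -
      ((1 : Matrix (Fin d) (Fin d) ℝ) + tk • gradU u x t + (tk ^ 2 / 2) • Umat u x t) a b
      = fab X a b (Xi X (x, t, tk)) - fab X a b (Xi X (x, t, 0))
        - tk * G1 u X a b (x, t, 0) - tk ^ 2 / 2 * G2 u X a b (x, t, 0) := by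
    have hsum : ((1 : Matrix (Fin d) (Fin d) ℝ) + tk • gradU u x t
        + (tk ^ 2 / 2) • Umat u x t) a b
        = (1 : Matrix (Fin d) (Fin d) ℝ) a b + tk * gradU u x t a b
          + tk ^ 2 / 2 * Umat u x t a b := by
      simp [Matrix.add_apply, Matrix.smul_apply, smul_eq_mul]
    rw [← hgτ, hsum, ← hg0, ← hg1, ← hg2]
    ring
  rw [heq]
  refine key.trans ?_
  -- final numeric bound
  have hsab : |M a b| ≤ S := by
    have h1 : ∑ b' : Fin d, |M a b'| ≤ S := by
      refine Finset.single_le_sum (f := fun a' => ∑ b' : Fin d, |M a' b'|)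
        (fun a' _ => Finset.sum_nonneg fun b' _ => abs_nonneg _) (Finset.mem_univ a)
    exact le_trans (Finset.single_le_sum (f := fun b' => |M a b'|)
      (fun b' _ => abs_nonneg _) (Finset.mem_univ b)) h1
  have hτ3 : tk ^ 3 ≤ 8 * Δt ^ 3 := by
    have h2 : tk ≤ 2 * Δt := by
      rw [htkdef]
      exact mul_le_mul_of_nonneg_right hkle hΔt.le
    calc tk ^ 3 ≤ (2 * Δt) ^ 3 := pow_le_pow_left₀ htkpos.le h2 3
      _ = 8 * Δt ^ 3 := by ring
  have hMle : M a b ≤ |M a b| := le_abs_self _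
  have hΔt3 : 0 < Δt ^ 3 := pow_pos hΔt 3
  nlinarith [abs_nonneg (M a b), mul_le_mul_of_nonneg_left hτ3 (abs_nonneg (M a b)),
    mul_le_mul_of_nonneg_right (hMle.trans hsab) (pow_pos htkpos 3).le,
    mul_le_mul_of_nonneg_left hτ3 hSnonneg]
end

section
/- Second-order-in-time GLD approximation of the upper-convected derivative: for sufficiently smooth ζ and t ∈ [2Δt, T], ∇u-convected derivative ζ̌(x,t) := ∂ζ/∂t + (u·∇)ζ − (∇u)ζ − ζ(∇u)ᵀ satisfies ζ̌(x,t) = (1/(2Δt))·[3ζ(x,t) − 4 L₁(x,t) ζ(X₁(x,t), t−Δt) L₁(x,t)ᵀ + L̃₁(x,t) ζ(X̃₁(x,t), t−2Δt) L̃₁(x,t)ᵀ] + O(Δt²), where L₁ = I + Δt∇u, L̃₁ = I + 2Δt∇u, X₁(x,t) = x − Δt·u(x,t), X̃₁(x,t) = x − 2Δt·u(x,t). -/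
open Matrix

section auxlemmas

variable {E : Type*} [NormedAddCommGroup E] [NormedSpace ℝ E]

lemma hasDerivAt_line {F : E → ℝ} (hF : Differentiable ℝ F) (p₀ v : E) (s : ℝ) :
    HasDerivAt (fun s : ℝ => F (p₀ + s • v)) (fderiv ℝ F (p₀ + s • v) v) s := by
  have hc : HasDerivAt (fun s : ℝ => p₀ + s • v) v s := by
    simpa using ((hasDerivAt_id s).smul_const v).const_add p₀
  exact (hF (p₀ + s • v)).hasFDerivAt.comp_hasDerivAt s hc

lemma clm_comp_fderiv {W W' : Type*} [NormedAddCommGroup W] [NormedSpace ℝ W]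
    [NormedAddCommGroup W'] [NormedSpace ℝ W'] (A : W →L[ℝ] W') {F : E → W}
    (hF : Differentiable ℝ F) :
    fderiv ℝ (fun q => A (F q)) = fun p => A.comp (fderiv ℝ F p) :=
  funext fun p => (A.hasFDerivAt.comp p (hF p).hasFDerivAt).fderiv

lemma line_derivs {F : E → ℝ} (hF : ContDiff ℝ (⊤ : ℕ∞) F) (v : E) (p₀ : E) (s : ℝ) :
    HasDerivAt (fun s : ℝ => F (p₀ + s • v)) (fderiv ℝ F (p₀ + s • v) v) s ∧
    HasDerivAt (fun s : ℝ => fderiv ℝ F (p₀ + s • v) v)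
        (fderiv ℝ (fderiv ℝ F) (p₀ + s • v) v v) s ∧
    HasDerivAt (fun s : ℝ => fderiv ℝ (fderiv ℝ F) (p₀ + s • v) v v)
        (fderiv ℝ (fderiv ℝ (fderiv ℝ F)) (p₀ + s • v) v v v) s := by
  have htop : ((⊤ : ℕ∞) : WithTop ℕ∞) + 1 ≤ ((⊤ : ℕ∞) : WithTop ℕ∞) := by simp
  have hdF : ContDiff ℝ (⊤ : ℕ∞) (fderiv ℝ F) := hF.fderiv_right htop
  have hd2F : ContDiff ℝ (⊤ : ℕ∞) (fderiv ℝ (fderiv ℝ F)) := hdF.fderiv_right htop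
  refine ⟨hasDerivAt_line (hF.differentiable (by simp)) p₀ v s, ?_, ?_⟩
  · have hg1 : (fun q => fderiv ℝ F q v)
        = fun q => (ContinuousLinearMap.apply ℝ ℝ v) (fderiv ℝ F q) := rfl
    have hg1d : Differentiable ℝ (fun q => fderiv ℝ F q v) := by
      rw [hg1]
      exact (((ContinuousLinearMap.apply ℝ ℝ v).contDiff).comp hdF).differentiable (by simp)
    have h := hasDerivAt_line hg1d p₀ v s
    have he : fderiv ℝ (fun q => fderiv ℝ F q v) (p₀ + s • v) v
        = fderiv ℝ (fderiv ℝ F) (p₀ + s • v) v v := by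
      rw [hg1, clm_comp_fderiv (ContinuousLinearMap.apply ℝ ℝ v)
        (hdF.differentiable (by simp))]
      simp
    rwa [he] at h
  · have hg2 : (fun q => fderiv ℝ (fderiv ℝ F) q v v)
        = fun q => ((ContinuousLinearMap.apply ℝ ℝ v).comp
            (ContinuousLinearMap.apply ℝ (E →L[ℝ] ℝ) v)) (fderiv ℝ (fderiv ℝ F) q) := rfl
    have hg2d : Differentiable ℝ (fun q => fderiv ℝ (fderiv ℝ F) q v v) := by
      rw [hg2]
      exact ((((ContinuousLinearMap.apply ℝ ℝ v).comp
        (ContinuousLinearMap.apply ℝ (E →L[ℝ] ℝ) v)).contDiff).comp hd2F).differentiable (by simp)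
    have h := hasDerivAt_line hg2d p₀ v s
    have he : fderiv ℝ (fun q => fderiv ℝ (fderiv ℝ F) q v v) (p₀ + s • v) v
        = fderiv ℝ (fderiv ℝ (fderiv ℝ F)) (p₀ + s • v) v v v := by
      rw [hg2, clm_comp_fderiv ((ContinuousLinearMap.apply ℝ ℝ v).comp
        (ContinuousLinearMap.apply ℝ (E →L[ℝ] ℝ) v)) (hd2F.differentiable (by simp))]
      simp
    rwa [he] at h

end auxlemmas

lemma mvt_bound {h h' : ℝ → ℝ} {A B : ℝ}
    (hh : ∀ s ∈ Set.Icc (0:ℝ) B, HasDerivAt h (h' s) s)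
    (hb : ∀ s ∈ Set.Icc (0:ℝ) B, |h' s| ≤ A) (h0 : h 0 = 0) (hB : 0 ≤ B) :
    ∀ s ∈ Set.Icc (0:ℝ) B, |h s| ≤ A * s := by
  intro s hs
  have := Convex.norm_image_sub_le_of_norm_hasDerivWithin_le
    (f := h) (f' := h') (C := A) (fun y hy => (hh y hy).hasDerivWithinAt)
    (fun y hy => by simpa [Real.norm_eq_abs] using hb y hy)
    (convex_Icc 0 B) (Set.left_mem_Icc.2 hB) hs
  simpa [h0, Real.norm_eq_abs, abs_of_nonneg hs.1] using this

lemma key_taylor {w w1 w2 w3 : ℝ → ℝ} {Δ M : ℝ} (hΔ : 0 < Δ)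
    (hw : ∀ s ∈ Set.Icc (0:ℝ) (2*Δ), HasDerivAt w (w1 s) s)
    (hw1 : ∀ s ∈ Set.Icc (0:ℝ) (2*Δ), HasDerivAt w1 (w2 s) s)
    (hw2 : ∀ s ∈ Set.Icc (0:ℝ) (2*Δ), HasDerivAt w2 (w3 s) s)
    (hM : ∀ s ∈ Set.Icc (0:ℝ) (2*Δ), |w1 s| ≤ M ∧ |w2 s| ≤ M ∧ |w3 s| ≤ M) :
    |3*w 0 - 4*w Δ + w (2*Δ) + 2*Δ*w1 0| ≤ 12*M*Δ^3 ∧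
    |w 0 - 2*w Δ + w (2*Δ)| ≤ 6*M*Δ^2 ∧
    |w (2*Δ) - w Δ| ≤ M*Δ := by
  have hΔ0 : (0:ℝ) ≤ Δ := hΔ.le
  have h2Δ : (0:ℝ) ≤ 2*Δ := by linarith
  have h0mem : (0:ℝ) ∈ Set.Icc (0:ℝ) (2*Δ) := Set.left_mem_Icc.2 h2Δ
  have hM0 : 0 ≤ M := le_trans (abs_nonneg _) (hM 0 h0mem).1
  have hmem : ∀ s ∈ Set.Icc (0:ℝ) Δ, s ∈ Set.Icc (0:ℝ) (2*Δ) := by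
    intro s hs; exact ⟨hs.1, by linarith [hs.2]⟩
  have hmem2 : ∀ s ∈ Set.Icc (0:ℝ) Δ, 2*s ∈ Set.Icc (0:ℝ) (2*Δ) := by
    intro s hs; exact ⟨by linarith [hs.1], by linarith [hs.2]⟩
  have hΔmem : Δ ∈ Set.Icc (0:ℝ) Δ := Set.right_mem_Icc.2 hΔ0
  have hcomp : ∀ (g g' : ℝ → ℝ), (∀ s ∈ Set.Icc (0:ℝ) (2*Δ), HasDerivAt g (g' s) s) →
      ∀ s ∈ Set.Icc (0:ℝ) Δ, HasDerivAt (fun s => g (2*s)) (g' (2*s) * 2) s := by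
    intro g g' hg s hs
    have h2 : HasDerivAt (fun s : ℝ => 2*s) 2 s := by
      simpa using (hasDerivAt_id s).const_mul (2:ℝ)
    exact (hg (2*s) (hmem2 s hs)).comp s h2
  constructor
  · set φ : ℝ → ℝ := fun s => 3*w 0 - 4*w s + w (2*s) + 2*s*w1 0 with hφ
    set φ1 : ℝ → ℝ := fun s => -(4*w1 s) + w1 (2*s) * 2 + 2*w1 0 with hφ1
    set φ2 : ℝ → ℝ := fun s => -(4*w2 s) + w2 (2*s) * 2 * 2 with hφ2
    set φ3 : ℝ → ℝ := fun s => -(4*w3 s) + w3 (2*s) * 2 * 2 * 2 with hφ3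
    have hdφ : ∀ s ∈ Set.Icc (0:ℝ) Δ, HasDerivAt φ (φ1 s) s := by
      intro s hs
      have h1 : HasDerivAt (fun s => 3*w 0 - 4*w s) (-(4*w1 s)) s := by
        simpa using (((hw s (hmem s hs)).const_mul (4:ℝ)).const_sub (3*w 0))
      have h2 := hcomp w w1 hw s hs
      have h3 : HasDerivAt (fun s : ℝ => 2*s*w1 0) (2*w1 0) s := by
        simpa [mul_comm] using ((hasDerivAt_id s).const_mul (2:ℝ)).mul_const (w1 0)
      simpa [hφ, hφ1, Pi.add_def] using (h1.add h2).add h3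
    have hdφ1 : ∀ s ∈ Set.Icc (0:ℝ) Δ, HasDerivAt φ1 (φ2 s) s := by
      intro s hs
      have h1 : HasDerivAt (fun s => -(4*w1 s)) (-(4*w2 s)) s := by
        simpa [Pi.neg_def] using ((hw1 s (hmem s hs)).const_mul (4:ℝ)).neg
      have h2 := (hcomp w1 w2 hw1 s hs).mul_const (2:ℝ)
      have h3 : HasDerivAt (fun _ : ℝ => 2*w1 0) 0 s := hasDerivAt_const _ _
      simpa [hφ1, hφ2, Pi.add_def] using (h1.add h2).add h3
    have hdφ2 : ∀ s ∈ Set.Icc (0:ℝ) Δ, HasDerivAt φ2 (φ3 s) s := by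
      intro s hs
      have h1 : HasDerivAt (fun s => -(4*w2 s)) (-(4*w3 s)) s := by
        simpa [Pi.neg_def] using ((hw2 s (hmem s hs)).const_mul (4:ℝ)).neg
      have h2 := ((hcomp w2 w3 hw2 s hs).mul_const (2:ℝ)).mul_const (2:ℝ)
      simpa [hφ2, hφ3, Pi.add_def] using h1.add h2
    have hφ3b : ∀ s ∈ Set.Icc (0:ℝ) Δ, |φ3 s| ≤ 12*M := by
      intro s hs
      have b1 := (hM s (hmem s hs)).2.2
      have b2 := (hM (2*s) (hmem2 s hs)).2.2
      simp only [hφ3]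
      have h := abs_add_le (-(4*w3 s)) (w3 (2*s)*2*2*2)
      have e1 : |(-(4*w3 s))| = 4*|w3 s| := by
        rw [abs_neg, abs_mul]; norm_num
      have e2 : |w3 (2*s)*2*2*2| = |w3 (2*s)| * 8 := by
        simp only [abs_mul, abs_two]; ring
      linarith [b1, b2, h, e1, e2]
    have hφ2_0 : φ2 0 = 0 := by simp only [hφ2, mul_zero]; ring
    have hφ2b := mvt_bound hdφ2 hφ3b hφ2_0 hΔ0
    have hφ2b' : ∀ s ∈ Set.Icc (0:ℝ) Δ, |φ2 s| ≤ 12*M*Δ := by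
      intro s hs
      refine (hφ2b s hs).trans ?_
      have := hs.2
      nlinarith [hM0]
    have hφ1_0 : φ1 0 = 0 := by simp only [hφ1, mul_zero]; ring
    have hφ1b := mvt_bound hdφ1 hφ2b' hφ1_0 hΔ0
    have hφ1b' : ∀ s ∈ Set.Icc (0:ℝ) Δ, |φ1 s| ≤ 12*M*Δ*Δ := by
      intro s hs
      refine (hφ1b s hs).trans ?_
      have := hs.2
      nlinarith [hM0, hΔ0, mul_nonneg hM0 hΔ0, hs.1]
    have hφ_0 : φ 0 = 0 := by simp only [hφ, mul_zero, zero_mul]; ring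
    have hφb := mvt_bound hdφ hφ1b' hφ_0 hΔ0
    have hfin := hφb Δ hΔmem
    simp only [hφ] at hfin
    calc |3*w 0 - 4*w Δ + w (2*Δ) + 2*Δ*w1 0| ≤ 12*M*Δ*Δ*Δ := hfin
    _ = 12*M*Δ^3 := by ring
  constructor
  · set ψ : ℝ → ℝ := fun s => w 0 - 2*w s + w (2*s) with hψ
    set ψ1 : ℝ → ℝ := fun s => -(2*w1 s) + w1 (2*s) * 2 with hψ1
    set ψ2 : ℝ → ℝ := fun s => -(2*w2 s) + w2 (2*s) * 2 * 2 with hψ2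
    have hdψ : ∀ s ∈ Set.Icc (0:ℝ) Δ, HasDerivAt ψ (ψ1 s) s := by
      intro s hs
      have h1 : HasDerivAt (fun s => w 0 - 2*w s) (-(2*w1 s)) s := by
        simpa using ((hw s (hmem s hs)).const_mul (2:ℝ)).const_sub (w 0)
      simpa [hψ, hψ1, Pi.add_def] using h1.add (hcomp w w1 hw s hs)
    have hdψ1 : ∀ s ∈ Set.Icc (0:ℝ) Δ, HasDerivAt ψ1 (ψ2 s) s := by
      intro s hs
      have h1 : HasDerivAt (fun s => -(2*w1 s)) (-(2*w2 s)) s := by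
        simpa [Pi.neg_def] using ((hw1 s (hmem s hs)).const_mul (2:ℝ)).neg
      simpa [hψ1, hψ2, Pi.add_def] using h1.add ((hcomp w1 w2 hw1 s hs).mul_const (2:ℝ))
    have hψ2b : ∀ s ∈ Set.Icc (0:ℝ) Δ, |ψ2 s| ≤ 6*M := by
      intro s hs
      have b1 := (hM s (hmem s hs)).2.1
      have b2 := (hM (2*s) (hmem2 s hs)).2.1
      simp only [hψ2]
      have h := abs_add_le (-(2*w2 s)) (w2 (2*s)*2*2)
      have e1 : |(-(2*w2 s))| = 2*|w2 s| := by
        rw [abs_neg, abs_mul]; norm_num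
      have e2 : |w2 (2*s)*2*2| = |w2 (2*s)| * 4 := by
        simp only [abs_mul, abs_two]; ring
      linarith [b1, b2, h, e1, e2]
    have hψ1_0 : ψ1 0 = 0 := by simp only [hψ1, mul_zero]; ring
    have hψ1b := mvt_bound hdψ1 hψ2b hψ1_0 hΔ0
    have hψ1b' : ∀ s ∈ Set.Icc (0:ℝ) Δ, |ψ1 s| ≤ 6*M*Δ := by
      intro s hs
      refine (hψ1b s hs).trans ?_
      have := hs.2
      nlinarith [hM0]
    have hψ_0 : ψ 0 = 0 := by simp only [hψ, mul_zero]; ring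
    have hψb := mvt_bound hdψ hψ1b' hψ_0 hΔ0
    have hfin := hψb Δ hΔmem
    simp only [hψ] at hfin
    calc |w 0 - 2*w Δ + w (2*Δ)| ≤ 6*M*Δ*Δ := hfin
    _ = 6*M*Δ^2 := by ring
  · have := Convex.norm_image_sub_le_of_norm_hasDerivWithin_le
      (f := w) (f' := w1) (C := M) (fun y hy => (hw y hy).hasDerivWithinAt)
      (fun y hy => by simpa [Real.norm_eq_abs] using (hM y hy).1)
      (convex_Icc 0 (2*Δ)) (hmem Δ hΔmem) (Set.right_mem_Icc.2 h2Δ)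
    have h2 : |(2*Δ) - Δ| = Δ := by rw [abs_of_nonneg (by linarith)]; ring
    simpa [Real.norm_eq_abs, h2] using this

lemma conj_expand {n : ℕ} (G Z : Matrix (Fin n) (Fin n) ℝ) (s : ℝ) :
    (1 + s • G) * Z * (1 + s • G)ᵀ =
      Z + s • (G * Z + Z * Gᵀ) + (s*s) • (G * Z * Gᵀ) := by
  rw [Matrix.transpose_add, Matrix.transpose_smul, Matrix.transpose_one]
  simp only [Matrix.add_mul, Matrix.mul_add, Matrix.smul_mul, Matrix.mul_smul,
    Matrix.one_mul, Matrix.mul_one, smul_smul, smul_add]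
  module

lemma main_id {n : ℕ} (G Z0 Z1 Z2 : Matrix (Fin n) (Fin n) ℝ) (s : ℝ) :
    ((3:ℝ) • Z0 - (4:ℝ) • ((1 + s • G) * Z1 * (1 + s • G)ᵀ)
      + (1 + (2*s) • G) * Z2 * (1 + (2*s) • G)ᵀ) + (2*s) • (G * Z0 + Z0 * Gᵀ)
    = ((3:ℝ) • Z0 - (4:ℝ) • Z1 + Z2)
      + (2*s) • (G * (Z0 - (2:ℝ) • Z1 + Z2) + (Z0 - (2:ℝ) • Z1 + Z2) * Gᵀ)
      + (4*s^2) • (G * (Z2 - Z1) * Gᵀ) := by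
  rw [conj_expand, conj_expand]
  simp only [Matrix.mul_add, Matrix.add_mul, Matrix.mul_sub, Matrix.sub_mul,
    Matrix.mul_smul, Matrix.smul_mul, smul_add, smul_sub, smul_smul]
  module

/-- The upper-convected time derivative
`ζ̌ = ∂ζ/∂t + (u·∇)ζ − (∇u)ζ − ζ(∇u)ᵀ`. -/
noncomputable def ucd {d : ℕ} (u : (Fin d → ℝ) → ℝ → (Fin d → ℝ))
    (ζ : (Fin d → ℝ) → ℝ → Matrix (Fin d) (Fin d) ℝ)
    (x : Fin d → ℝ) (t : ℝ) : Matrix (Fin d) (Fin d) ℝ :=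
  Matrix.of (fun a b =>
      deriv (fun τ => ζ x τ a b) t + fderiv ℝ (fun z => ζ z t a b) x (u x t))
    - gradU u x t * ζ x t - ζ x t * (gradU u x t)ᵀ

set_option maxHeartbeats 2000000 in
/-- Second-order-in-time GLD approximation of the upper-convected derivative:
`ζ̌(x,t) = (1/(2Δt))[3ζ(x,t) − 4 L₁ ζ(X₁(x,t), t−Δt) L₁ᵀ + L̃₁ ζ(X̃₁(x,t), t−2Δt) L̃₁ᵀ] + O(Δt²)`
with `L₁ = I + Δt∇u`, `L̃₁ = I + 2Δt∇u`, `X₁(x,t) = x − Δt u(x,t)`,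
`X̃₁(x,t) = x − 2Δt u(x,t)`, uniformly in `x ∈ Ω̄` and `t ∈ [2Δt, T]`. -/
theorem gld_second_order_in_time (d : ℕ) (T : ℝ) (hT : 0 < T)
    (Ω : Set (Fin d → ℝ)) (hΩ : Bornology.IsBounded Ω)
    (u : (Fin d → ℝ) → ℝ → (Fin d → ℝ))
    (ζ : (Fin d → ℝ) → ℝ → Matrix (Fin d) (Fin d) ℝ)
    (hu : ContDiff ℝ (⊤ : ℕ∞) (fun q : (Fin d → ℝ) × ℝ => u q.1 q.2))
    (hu0 : ∀ t : ℝ, ∀ x ∈ frontier Ω, u x t = 0)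
    (hζ : ∀ a b : Fin d, ContDiff ℝ (⊤ : ℕ∞) (fun q : (Fin d → ℝ) × ℝ => ζ q.1 q.2 a b))
    (Ku : ℝ)
    (hKu : ∀ t ∈ Set.Icc (0:ℝ) T, ∀ x ∈ closure Ω,
      ‖u x t‖ ≤ Ku ∧ ‖fderiv ℝ (fun z => u z t) x‖ ≤ Ku) :
    ∃ C > (0 : ℝ), ∀ Δt : ℝ, 0 < Δt → Δt * Ku ≤ 1 / 8 →
      ∀ t ∈ Set.Icc (2 * Δt) T, ∀ x ∈ closure Ω, ∀ a b : Fin d,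
        |ucd u ζ x t a b -
          (1 / (2 * Δt)) *
            ((((3 : ℝ) • ζ x t
              - (4 : ℝ) • ((1 + Δt • gradU u x t) *
                  ζ (x - Δt • u x t) (t - Δt) * (1 + Δt • gradU u x t)ᵀ)
              + (1 + (2 * Δt) • gradU u x t) *
                  ζ (x - (2 * Δt) • u x t) (t - 2 * Δt) *
                  (1 + (2 * Δt) • gradU u x t)ᵀ : Matrix (Fin d) (Fin d) ℝ)) a b)|
          ≤ C * Δt ^ 2 := by
  classical
  have htop : ((⊤ : ℕ∞) : WithTop ℕ∞) + 1 ≤ ((⊤ : ℕ∞) : WithTop ℕ∞) := by simp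
  set f : Fin d → Fin d → ((Fin d → ℝ) × ℝ) → ℝ :=
    fun i j q => ζ q.1 q.2 i j with hf_def
  have hf : ∀ i j, ContDiff ℝ (⊤ : ℕ∞) (f i j) := fun i j => hζ i j
  obtain ⟨R₀, hR₀⟩ := hΩ.closure.subset_closedBall 0
  set Kp : Set ((Fin d → ℝ) × ℝ) :=
    (Metric.closedBall (0 : Fin d → ℝ) (|R₀| + 1)) ×ˢ (Set.Icc (0:ℝ) T) with hKp_def
  set Kv : Set ((Fin d → ℝ) × ℝ) :=
    (Metric.closedBall (0 : Fin d → ℝ) |Ku|) ×ˢ (Set.Icc (-1:ℝ) (-1)) with hKv_def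
  have hKpc : IsCompact Kp := (isCompact_closedBall _ _).prod isCompact_Icc
  have hKvc : IsCompact Kv := (isCompact_closedBall _ _).prod isCompact_Icc
  have hbound : ∀ i j : Fin d, ∃ M : ℝ, 0 ≤ M ∧ ∀ p v, p ∈ Kp → v ∈ Kv →
      |fderiv ℝ (f i j) p v| ≤ M ∧
      |fderiv ℝ (fderiv ℝ (f i j)) p v v| ≤ M ∧
      |fderiv ℝ (fderiv ℝ (fderiv ℝ (f i j))) p v v v| ≤ M := by
    intro i j
    have hF := hf i j
    have h1 : Continuous (fderiv ℝ (f i j)) := (hF.fderiv_right htop).continuous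
    have h2 : Continuous (fderiv ℝ (fderiv ℝ (f i j))) :=
      ((hF.fderiv_right htop).fderiv_right htop).continuous
    have h3 :=
      (((hF.fderiv_right htop).fderiv_right htop).fderiv_right htop).continuous
    set m : ((Fin d → ℝ) × ℝ) × ((Fin d → ℝ) × ℝ) → ℝ := fun pv =>
      |fderiv ℝ (f i j) pv.1 pv.2| + |fderiv ℝ (fderiv ℝ (f i j)) pv.1 pv.2 pv.2|
        + |fderiv ℝ (fderiv ℝ (fderiv ℝ (f i j))) pv.1 pv.2 pv.2 pv.2| with hm_def
    have hmc : Continuous m := by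
      refine Continuous.add (Continuous.add ?_ ?_) ?_
      · exact ((h1.comp continuous_fst).clm_apply continuous_snd).abs
      · exact (((h2.comp continuous_fst).clm_apply continuous_snd).clm_apply
          continuous_snd).abs
      · exact ((((h3.comp continuous_fst).clm_apply continuous_snd).clm_apply
          continuous_snd).clm_apply continuous_snd).abs
    obtain ⟨M, hM⟩ := (hKpc.prod hKvc).exists_bound_of_continuousOn hmc.continuousOn
    refine ⟨max M 0, le_max_right _ _, fun p v hp hv => ?_⟩
    have h := hM (p, v) (Set.mk_mem_prod hp hv)
    rw [Real.norm_eq_abs] at h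
    have hm3 : m (p, v) ≤ M := (le_abs_self _).trans h
    simp only [hm_def] at hm3
    have a1 := abs_nonneg (fderiv ℝ (f i j) p v)
    have a2 := abs_nonneg (fderiv ℝ (fderiv ℝ (f i j)) p v v)
    have a3 := abs_nonneg (fderiv ℝ (fderiv ℝ (fderiv ℝ (f i j))) p v v v)
    have hMmax := le_max_left M 0
    exact ⟨by linarith, by linarith, by linarith⟩
  choose M hM0 hMb using hbound
  set Msum : ℝ := ∑ i : Fin d, ∑ j : Fin d, M i j with hMsum_def
  have hMsum0 : 0 ≤ Msum := Finset.sum_nonneg fun i _ =>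
    Finset.sum_nonneg fun j _ => hM0 i j
  have hMsum_ge : ∀ i j, M i j ≤ Msum := by
    intro i j
    have h1 : M i j ≤ ∑ j : Fin d, M i j :=
      Finset.single_le_sum (fun k _ => hM0 i k) (Finset.mem_univ j)
    have h2 : (∑ j : Fin d, M i j) ≤ Msum :=
      Finset.single_le_sum (f := fun i => ∑ j : Fin d, M i j)
        (fun k _ => Finset.sum_nonneg fun l _ => hM0 k l) (Finset.mem_univ i)
    linarith
  set C0 : ℝ := 6*Msum + 12*(d:ℝ)*|Ku| *Msum + 2*(d:ℝ)^2*Ku^2*Msum with hC0_def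
  have hC0nn : 0 ≤ C0 := by
    have h1 : (0:ℝ) ≤ 12*(d:ℝ)*|Ku| *Msum :=
      mul_nonneg (mul_nonneg (mul_nonneg (by norm_num) (Nat.cast_nonneg d))
        (abs_nonneg Ku)) hMsum0
    have h2 : (0:ℝ) ≤ 2*(d:ℝ)^2*Ku^2*Msum :=
      mul_nonneg (mul_nonneg (mul_nonneg (by norm_num) (by positivity)) (sq_nonneg Ku))
        hMsum0
    have h3 : (0:ℝ) ≤ 6*Msum := by linarith
    rw [hC0_def]; linarith
  refine ⟨C0 + 1, by linarith, ?_⟩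
  intro Δt hΔt hΔKu t ht x hx a b
  obtain ⟨ht1, ht2⟩ := ht
  have htIcc : t ∈ Set.Icc (0:ℝ) T := ⟨by linarith, ht2⟩
  obtain ⟨hub, hgb⟩ := hKu t htIcc x hx
  have hKu0 : 0 ≤ Ku := le_trans (norm_nonneg _) hub
  set u₀ : Fin d → ℝ := u x t with hu₀_def
  set G : Matrix (Fin d) (Fin d) ℝ := gradU u x t with hG_def
  set Z0 : Matrix (Fin d) (Fin d) ℝ := ζ x t with hZ0_def
  set Z1 : Matrix (Fin d) (Fin d) ℝ := ζ (x - Δt • u₀) (t - Δt) with hZ1_def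
  set Z2 : Matrix (Fin d) (Fin d) ℝ := ζ (x - (2*Δt) • u₀) (t - 2*Δt) with hZ2_def
  set p₀ : (Fin d → ℝ) × ℝ := (x, t) with hp₀_def
  set v : (Fin d → ℝ) × ℝ := (-u₀, (-1:ℝ)) with hv_def
  have hpt : ∀ s : ℝ, p₀ + s • v = (x - s • u₀, t - s) := by
    intro s
    rw [hp₀_def, hv_def, Prod.smul_mk, Prod.mk_add_mk]
    refine Prod.ext ?_ ?_
    · simp [smul_neg, sub_eq_add_neg]
    · simp [smul_eq_mul, sub_eq_add_neg]
  have hmem_p : ∀ s ∈ Set.Icc (0:ℝ) (2*Δt), p₀ + s • v ∈ Kp := by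
    intro s hs
    rw [hpt s, hKp_def]
    refine Set.mk_mem_prod ?_ ?_
    · rw [Metric.mem_closedBall, dist_zero_right]
      have hxn : ‖x‖ ≤ R₀ := by
        have := hR₀ hx; rwa [Metric.mem_closedBall, dist_zero_right] at this
      have h1 : ‖x - s • u₀‖ ≤ ‖x‖ + ‖s • u₀‖ := norm_sub_le _ _
      have h2 : ‖s • u₀‖ = |s| * ‖u₀‖ := by rw [norm_smul, Real.norm_eq_abs]
      have h3 : |s| = s := abs_of_nonneg hs.1
      have h4 : s * ‖u₀‖ ≤ 2*Δt * Ku := by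
        apply mul_le_mul hs.2 hub (norm_nonneg _) (by linarith)
      have h5 : 2*Δt*Ku ≤ 1/4 := by linarith
      have h6 : R₀ ≤ |R₀| := le_abs_self R₀
      rw [h2, h3] at h1
      linarith
    · exact ⟨by linarith [hs.2], by linarith [hs.1]⟩
  have hmem_v : v ∈ Kv := by
    rw [hv_def, hKv_def]
    refine Set.mk_mem_prod ?_ ?_
    · rw [Metric.mem_closedBall, dist_zero_right, norm_neg]
      exact hub.trans (le_abs_self Ku)
    · exact ⟨le_refl _, le_refl _⟩
  set w : Fin d → Fin d → ℝ → ℝ := fun i j s => f i j (p₀ + s • v) with hw_def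
  set w1 : Fin d → Fin d → ℝ → ℝ :=
    fun i j s => fderiv ℝ (f i j) (p₀ + s • v) v with hw1_def
  set w2 : Fin d → Fin d → ℝ → ℝ :=
    fun i j s => fderiv ℝ (fderiv ℝ (f i j)) (p₀ + s • v) v v with hw2_def
  set w3 : Fin d → Fin d → ℝ → ℝ :=
    fun i j s => fderiv ℝ (fderiv ℝ (fderiv ℝ (f i j))) (p₀ + s • v) v v v with hw3_def
  have hder := fun (i j : Fin d) (s : ℝ) => line_derivs (hf i j) v p₀ s
  have hMb' : ∀ i j, ∀ s ∈ Set.Icc (0:ℝ) (2*Δt),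
      |w1 i j s| ≤ Msum ∧ |w2 i j s| ≤ Msum ∧ |w3 i j s| ≤ Msum := by
    intro i j s hs
    obtain ⟨b1, b2, b3⟩ := hMb i j (p₀ + s • v) v (hmem_p s hs) hmem_v
    exact ⟨b1.trans (hMsum_ge i j), b2.trans (hMsum_ge i j), b3.trans (hMsum_ge i j)⟩
  have hkt : ∀ i j : Fin d,
      |3*w i j 0 - 4*w i j Δt + w i j (2*Δt) + 2*Δt*w1 i j 0| ≤ 12*Msum*Δt^3 ∧
      |w i j 0 - 2*w i j Δt + w i j (2*Δt)| ≤ 6*Msum*Δt^2 ∧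
      |w i j (2*Δt) - w i j Δt| ≤ Msum*Δt := by
    intro i j
    exact key_taylor hΔt (fun s _ => (hder i j s).1) (fun s _ => (hder i j s).2.1)
      (fun s _ => (hder i j s).2.2) (hMb' i j)
  have hZ0e : ∀ i j, Z0 i j = w i j 0 := by
    intro i j
    show Z0 i j = f i j (p₀ + (0:ℝ) • v)
    rw [hpt 0, zero_smul, sub_zero, sub_zero]
  have hZ1e : ∀ i j, Z1 i j = w i j Δt := by
    intro i j
    show Z1 i j = f i j (p₀ + Δt • v)
    rw [hpt Δt]
  have hZ2e : ∀ i j, Z2 i j = w i j (2*Δt) := by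
    intro i j
    show Z2 i j = f i j (p₀ + (2*Δt) • v)
    rw [hpt (2*Δt)]
  -- gradU entry bound
  have hud : Differentiable ℝ (fun z => u z t) := by
    have : ContDiff ℝ (⊤ : ℕ∞) (fun z : Fin d → ℝ => u z t) :=
      hu.comp (contDiff_id.prodMk contDiff_const)
    exact this.differentiable (by simp)
  have hGb : ∀ i k, |G i k| ≤ |Ku| := by
    intro i k
    have hval : G i k = (fderiv ℝ (fun z => u z t) x (Pi.single k 1)) i := by
      rw [hG_def]
      show fderiv ℝ (fun z => u z t i) x (Pi.single k 1) = _
      have e : fderiv ℝ (fun z => u z t i) x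
          = (ContinuousLinearMap.proj i).comp (fderiv ℝ (fun z => u z t) x) := by
        have h := clm_comp_fderiv (ContinuousLinearMap.proj (R := ℝ)
          (φ := fun _ : Fin d => ℝ) i) hud
        exact congrFun h x
      rw [e]
      simp
    rw [hval]
    have h1 : |(fderiv ℝ (fun z => u z t) x (Pi.single k 1)) i|
        ≤ ‖fderiv ℝ (fun z => u z t) x (Pi.single k 1)‖ := by
      have := norm_le_pi_norm (fderiv ℝ (fun z => u z t) x (Pi.single k 1)) i
      simpa [Real.norm_eq_abs] using this
    have h2 : ‖fderiv ℝ (fun z => u z t) x (Pi.single k 1)‖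
        ≤ ‖fderiv ℝ (fun z => u z t) x‖ * ‖(Pi.single k 1 : Fin d → ℝ)‖ :=
      ContinuousLinearMap.le_opNorm _ _
    have h3 : ‖(Pi.single k 1 : Fin d → ℝ)‖ ≤ 1 := by
      rw [pi_norm_le_iff_of_nonneg zero_le_one]
      intro j
      rcases eq_or_ne j k with h | h
      · subst h; simp
      · simp [Pi.single_apply, h]
    have h5 : Ku ≤ |Ku| := le_abs_self Ku
    have h6 := norm_nonneg (fderiv ℝ (fun z => u z t) x)
    nlinarith [norm_nonneg (fderiv ℝ (fun z => u z t) x (Pi.single k 1))]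
  -- main algebraic identity, entrywise
  have hmain := main_id G Z0 Z1 Z2 Δt
  have hentry := congrFun (congrFun hmain a) b
  simp only [Matrix.add_apply, Matrix.sub_apply, Matrix.smul_apply, smul_eq_mul] at hentry
  -- ucd entry identity
  have hucd : ucd u ζ x t a b = -(w1 a b 0) - (G * Z0) a b - (Z0 * Gᵀ) a b := by
    have hD : Differentiable ℝ (f a b) := (hf a b).differentiable (by simp)
    have hx1 : HasFDerivAt (fun z : Fin d → ℝ => (z, t))
        ((ContinuousLinearMap.id ℝ (Fin d → ℝ)).prod 0) x :=
      (hasFDerivAt_id x).prodMk (hasFDerivAt_const t x)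
    have hfx : fderiv ℝ (fun z => ζ z t a b) x u₀ = fderiv ℝ (f a b) p₀ (u₀, 0) := by
      have hcomp := ((hD p₀).hasFDerivAt.comp x hx1).fderiv
      have e : fderiv ℝ (fun z => ζ z t a b) x
          = (fderiv ℝ (f a b) p₀).comp ((ContinuousLinearMap.id ℝ (Fin d → ℝ)).prod 0) :=
        hcomp
      rw [e]
      simp
    have ht1 : HasDerivAt (fun τ : ℝ => ((x, τ) : (Fin d → ℝ) × ℝ))
        (((0 : Fin d → ℝ), (1:ℝ)) : (Fin d → ℝ) × ℝ) t :=
      (hasDerivAt_const t x).prodMk (hasDerivAt_id t)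
    have hft : deriv (fun τ => ζ x τ a b) t
        = fderiv ℝ (f a b) p₀ ((0 : Fin d → ℝ), 1) := by
      have h := ((hD p₀).hasFDerivAt.comp_hasDerivAt t ht1).deriv
      exact h
    have hw10 : w1 a b 0 = fderiv ℝ (f a b) p₀ v := by
      rw [hw1_def]; simp
    have hvsum : v = -(((u₀, (0:ℝ)) : (Fin d → ℝ) × ℝ) + ((0 : Fin d → ℝ), (1:ℝ))) := by
      rw [hv_def, Prod.mk_add_mk]
      simp
    have hv2 : fderiv ℝ (f a b) p₀ v
        = -(fderiv ℝ (f a b) p₀ (u₀, 0)) - fderiv ℝ (f a b) p₀ ((0 : Fin d → ℝ), 1) := by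
      rw [hvsum, map_neg, map_add]; ring
    show (Matrix.of (fun a b =>
        deriv (fun τ => ζ x τ a b) t + fderiv ℝ (fun z => ζ z t a b) x (u x t))
      - gradU u x t * ζ x t - ζ x t * (gradU u x t)ᵀ) a b = _
    rw [Matrix.sub_apply, Matrix.sub_apply, Matrix.of_apply]
    rw [← hG_def, ← hZ0_def, ← hu₀_def, hfx, hft, hw10, hv2]
    ring
  -- bounds on entries of Ψ and D
  have hΨb : ∀ k l, |(Z0 - (2:ℝ) • Z1 + Z2) k l| ≤ 6*Msum*Δt^2 := by
    intro k l
    have e : (Z0 - (2:ℝ) • Z1 + Z2) k l = w k l 0 - 2*w k l Δt + w k l (2*Δt) := by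
      rw [Matrix.add_apply, Matrix.sub_apply, Matrix.smul_apply, smul_eq_mul,
        hZ0e k l, hZ1e k l, hZ2e k l]
    rw [e]
    exact (hkt k l).2.1
  have hDb : ∀ k l, |(Z2 - Z1) k l| ≤ Msum*Δt := by
    intro k l
    have e : (Z2 - Z1) k l = w k l (2*Δt) - w k l Δt := by
      rw [Matrix.sub_apply, hZ1e k l, hZ2e k l]
    rw [e]
    exact (hkt k l).2.2
  -- bounds on q2, q3
  have hcard : (Finset.univ : Finset (Fin d)).card = d := by simp
  have hq2a : |(G * (Z0 - (2:ℝ) • Z1 + Z2)) a b| ≤ (d:ℝ) * (|Ku| * (6*Msum*Δt^2)) := by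
    rw [Matrix.mul_apply]
    refine (Finset.abs_sum_le_sum_abs _ _).trans ?_
    have hterm : ∀ k ∈ Finset.univ, |G a k * (Z0 - (2:ℝ) • Z1 + Z2) k b|
        ≤ |Ku| * (6*Msum*Δt^2) := by
      intro k _
      rw [abs_mul]
      exact mul_le_mul (hGb a k) (hΨb k b) (abs_nonneg _) (abs_nonneg _)
    refine (Finset.sum_le_card_nsmul _ _ _ hterm).trans ?_
    rw [hcard, nsmul_eq_mul]
  have hq2b : |((Z0 - (2:ℝ) • Z1 + Z2) * Gᵀ) a b| ≤ (d:ℝ) * (|Ku| * (6*Msum*Δt^2)) := by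
    rw [Matrix.mul_apply]
    refine (Finset.abs_sum_le_sum_abs _ _).trans ?_
    have hterm : ∀ k ∈ Finset.univ, |(Z0 - (2:ℝ) • Z1 + Z2) a k * Gᵀ k b|
        ≤ |Ku| * (6*Msum*Δt^2) := by
      intro k _
      rw [abs_mul, Matrix.transpose_apply, mul_comm]
      exact mul_le_mul (hGb b k) (hΨb a k) (abs_nonneg _) (abs_nonneg _)
    refine (Finset.sum_le_card_nsmul _ _ _ hterm).trans ?_
    rw [hcard, nsmul_eq_mul]
  have hq3 : |(G * (Z2 - Z1) * Gᵀ) a b| ≤ (d:ℝ)^2 * Ku^2 * (Msum*Δt) := by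
    have hinner : ∀ k, |(G * (Z2 - Z1)) a k| ≤ (d:ℝ) * (|Ku| * (Msum*Δt)) := by
      intro k
      rw [Matrix.mul_apply]
      refine (Finset.abs_sum_le_sum_abs _ _).trans ?_
      have hterm : ∀ l ∈ Finset.univ, |G a l * (Z2 - Z1) l k|
          ≤ |Ku| * (Msum*Δt) := by
        intro l _
        rw [abs_mul]
        exact mul_le_mul (hGb a l) (hDb l k) (abs_nonneg _) (abs_nonneg _)
      refine (Finset.sum_le_card_nsmul _ _ _ hterm).trans ?_
      rw [hcard, nsmul_eq_mul]
    rw [Matrix.mul_apply]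
    refine (Finset.abs_sum_le_sum_abs _ _).trans ?_
    have hterm : ∀ k ∈ Finset.univ, |(G * (Z2 - Z1)) a k * Gᵀ k b|
        ≤ ((d:ℝ) * (|Ku| * (Msum*Δt))) * |Ku| := by
      intro k _
      rw [abs_mul, Matrix.transpose_apply]
      exact mul_le_mul (hinner k) (hGb b k) (abs_nonneg _)
        (by positivity)
    refine (Finset.sum_le_card_nsmul _ _ _ hterm).trans ?_
    rw [hcard, nsmul_eq_mul]
    have : (d:ℝ) * ((d:ℝ) * (|Ku| * (Msum*Δt)) * |Ku|) = (d:ℝ)^2 * (|Ku| *|Ku|) * (Msum*Δt) := by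
      ring
    rw [this, ← abs_mul, abs_mul_self]
    apply le_of_eq
    ring
  -- the key scalar identity
  have h2Δne : (2*Δt) ≠ 0 := by positivity
  have hkey : ucd u ζ x t a b -
      (1 / (2 * Δt)) * ((((3:ℝ) • Z0 - (4:ℝ) • ((1 + Δt • G) * Z1 * (1 + Δt • G)ᵀ)
        + (1 + (2*Δt) • G) * Z2 * (1 + (2*Δt) • G)ᵀ : Matrix (Fin d) (Fin d) ℝ)) a b)
      = -(1/(2*Δt)) * ((3*w a b 0 - 4*w a b Δt + w a b (2*Δt) + 2*Δt*w1 a b 0)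
          + 2*Δt*((G * (Z0 - (2:ℝ) • Z1 + Z2)) a b + ((Z0 - (2:ℝ) • Z1 + Z2) * Gᵀ) a b)
          + 4*Δt^2*((G * (Z2 - Z1) * Gᵀ) a b)) := by
    rw [hucd]
    simp only [Matrix.add_apply, Matrix.sub_apply, Matrix.smul_apply, smul_eq_mul]
    rw [hZ0e a b, hZ1e a b, hZ2e a b] at hentry
    rw [hZ0e a b]
    set P1 : ℝ := (((1 + Δt • G) * Z1 * (1 + Δt • G)ᵀ : Matrix (Fin d) (Fin d) ℝ)) a b with hP1_def
    set P2 : ℝ := (((1 + (2*Δt) • G) * Z2 * (1 + (2*Δt) • G)ᵀ : Matrix (Fin d) (Fin d) ℝ)) a b with hP2_def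
    set g1 : ℝ := (G * Z0) a b with hg1_def
    set g2 : ℝ := (Z0 * Gᵀ) a b with hg2_def
    set r1 : ℝ := (G * (Z0 - (2:ℝ) • Z1 + Z2)) a b with hr1_def
    set r2 : ℝ := ((Z0 - (2:ℝ) • Z1 + Z2) * Gᵀ) a b with hr2_def
    set r3 : ℝ := (G * (Z2 - Z1) * Gᵀ) a b with hr3_def
    field_simp
    linear_combination -hentry
  -- final estimate
  rw [hkey]
  rw [abs_mul, abs_neg, abs_of_pos (by positivity : (0:ℝ) < 1/(2*Δt))]
  have hq1 := (hkt a b).1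
  have habs1 : |(3*w a b 0 - 4*w a b Δt + w a b (2*Δt) + 2*Δt*w1 a b 0)
      + 2*Δt*((G * (Z0 - (2:ℝ) • Z1 + Z2)) a b + ((Z0 - (2:ℝ) • Z1 + Z2) * Gᵀ) a b)
      + 4*Δt^2*((G * (Z2 - Z1) * Gᵀ) a b)|
      ≤ 12*Msum*Δt^3 + 2*Δt*(2*((d:ℝ) * (|Ku| * (6*Msum*Δt^2))))
        + 4*Δt^2*((d:ℝ)^2 * Ku^2 * (Msum*Δt)) := by
    have t1 := abs_add_le ((3*w a b 0 - 4*w a b Δt + w a b (2*Δt) + 2*Δt*w1 a b 0)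
      + 2*Δt*((G * (Z0 - (2:ℝ) • Z1 + Z2)) a b + ((Z0 - (2:ℝ) • Z1 + Z2) * Gᵀ) a b))
      (4*Δt^2*((G * (Z2 - Z1) * Gᵀ) a b))
    have t2 := abs_add_le (3*w a b 0 - 4*w a b Δt + w a b (2*Δt) + 2*Δt*w1 a b 0)
      (2*Δt*((G * (Z0 - (2:ℝ) • Z1 + Z2)) a b + ((Z0 - (2:ℝ) • Z1 + Z2) * Gᵀ) a b))
    have t3 : |2*Δt*((G * (Z0 - (2:ℝ) • Z1 + Z2)) a b
        + ((Z0 - (2:ℝ) • Z1 + Z2) * Gᵀ) a b)|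
        ≤ 2*Δt*(2*((d:ℝ) * (|Ku| * (6*Msum*Δt^2)))) := by
      rw [abs_mul, abs_of_pos (by positivity : (0:ℝ) < 2*Δt)]
      have := (abs_add_le ((G * (Z0 - (2:ℝ) • Z1 + Z2)) a b)
        (((Z0 - (2:ℝ) • Z1 + Z2) * Gᵀ) a b)).trans (add_le_add hq2a hq2b)
      nlinarith [hΔt]
    have t4 : |4*Δt^2*((G * (Z2 - Z1) * Gᵀ) a b)|
        ≤ 4*Δt^2*((d:ℝ)^2 * Ku^2 * (Msum*Δt)) := by
      rw [abs_mul, abs_of_pos (by positivity : (0:ℝ) < 4*Δt^2)]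
      exact mul_le_mul_of_nonneg_left hq3 (by positivity)
    linarith
  refine le_trans (mul_le_mul_of_nonneg_left habs1 (by positivity : (0:ℝ) ≤ 1/(2*Δt))) ?_
  have heq : (1/(2*Δt)) * (12*Msum*Δt^3 + 2*Δt*(2*((d:ℝ) * (|Ku| * (6*Msum*Δt^2))))
      + 4*Δt^2*((d:ℝ)^2 * Ku^2 * (Msum*Δt))) = C0 * Δt^2 := by
    rw [hC0_def]
    field_simp
    ring
  rw [heq]
  nlinarith [sq_nonneg Δt, hC0nn]
end

section
/- Linear interpolation error at an upwind point gains a factor of Δt: for a C² function ζ on [0,a] with uniform grid of size h, linear interpolant Π_h^{(1)}, and upwind point y = x_i − Δt·u with |u| ≤ U^∞ and y ∈ [0,a], one has |(Π_h^{(1)}ζ)(y) − ζ(y)| ≤ C·U^∞·Δt·h·‖ζ‖_{C²}, where C is independent of h, Δt, and u. Consequently (1/Δt)|(Π_h^{(1)}ζ)(y) − ζ(y)| = O(h). -/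
/-- Piecewise linear Lagrange interpolation on the uniform grid of size `h`:
on the cell `[i₀h, (i₀+1)h]` containing `y` (with `i₀ = ⌊y/h⌋`),
`(Π_h ζ)(y) = ζ(i₀h)·((i₀+1)h − y)/h + ζ((i₀+1)h)·(y − i₀h)/h`. -/
noncomputable def linInterp (h : ℝ) (ζ : ℝ → ℝ) (y : ℝ) : ℝ :=
  let i0 : ℤ := ⌊y / h⌋
  ζ ((i0 : ℝ) * h) * ((((i0 : ℝ) + 1) * h - y) / h)
    + ζ (((i0 : ℝ) + 1) * h) * ((y - (i0 : ℝ) * h) / h)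

/-!
On the grid cell `[x₀, x₁]` containing `y`, the linear interpolant of `ζ` is the convex combination
of the values at the two endpoints, so its error at `y` is the same convex combination of two
first-order Taylor remainders about `y`; this bounds it by `M (x₁ - y)(y - x₀)`, with `M` a bound
on `ζ''`. The grid node `x_i` lies outside the open cell, so one of the two factors is at most
`|x_i - y| = Δt |u| ≤ Δt U^∞` and the other at most `h`.
-/

open Set

lemma abs_sub_le_of_abs_deriv_le {f : ℝ → ℝ} {M : ℝ} (hf : Differentiable ℝ f)
    (hM : ∀ s, |deriv f s| ≤ M) (s t : ℝ) : |f s - f t| ≤ M * |s - t| :=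
  convex_univ.norm_image_sub_le_of_norm_deriv_le (fun x _ => hf x) (fun x _ => hM x)
    (mem_univ t) (mem_univ s)

lemma abs_sub_sub_deriv_mul_le {f : ℝ → ℝ} {M : ℝ} (hf : Differentiable ℝ f)
    (hf' : ∀ s t, |deriv f s - deriv f t| ≤ M * |s - t|) (c b : ℝ) :
    |f b - f c - deriv f c * (b - c)| ≤ M * (b - c) ^ 2 := by
  have hM : 0 ≤ M := by simpa using (abs_nonneg _).trans (hf' 1 0)
  set g : ℝ → ℝ := fun x => f x - deriv f c * x
  have hg : ∀ x ∈ uIcc c b, HasDerivWithinAt g (deriv f x - deriv f c) (uIcc c b) x := by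
    intro x _
    have hgx : HasDerivAt g (deriv f x - deriv f c * 1) x :=
      (hf x).hasDerivAt.sub ((hasDerivAt_id x).const_mul (deriv f c))
    rw [mul_one] at hgx
    exact hgx.hasDerivWithinAt
  have hg' : ∀ x ∈ uIcc c b, ‖deriv f x - deriv f c‖ ≤ M * |b - c| := fun x hx =>
    (hf' x c).trans (mul_le_mul_of_nonneg_left (abs_sub_left_of_mem_uIcc hx) hM)
  have hmvt := (convex_uIcc c b).norm_image_sub_le_of_norm_hasDerivWithin_le hg hg'
    left_mem_uIcc right_mem_uIcc
  calc |f b - f c - deriv f c * (b - c)| = ‖g b - g c‖ := by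
        simp only [g, Real.norm_eq_abs]; ring_nf
    _ ≤ M * |b - c| * ‖b - c‖ := hmvt
    _ = M * (b - c) ^ 2 := by rw [Real.norm_eq_abs, mul_assoc, ← abs_mul, ← sq, abs_sq]

lemma abs_interp_sub_le {f : ℝ → ℝ} {M : ℝ} (hf : Differentiable ℝ f)
    (hf' : ∀ s t, |deriv f s - deriv f t| ≤ M * |s - t|) {x₀ x₁ y : ℝ} (hx : x₀ < x₁)
    (h₀ : x₀ ≤ y) (h₁ : y ≤ x₁) :
    |f x₀ * ((x₁ - y) / (x₁ - x₀)) + f x₁ * ((y - x₀) / (x₁ - x₀)) - f y|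
      ≤ M * (x₁ - y) * (y - x₀) := by
  have hd : 0 < x₁ - x₀ := sub_pos.2 hx
  set α := (x₁ - y) / (x₁ - x₀)
  set β := (y - x₀) / (x₁ - x₀)
  have hα : 0 ≤ α := div_nonneg (sub_nonneg.2 h₁) hd.le
  have hβ : 0 ≤ β := div_nonneg (sub_nonneg.2 h₀) hd.le
  set r₀ := f x₀ - f y - deriv f y * (x₀ - y)
  set r₁ := f x₁ - f y - deriv f y * (x₁ - y)
  -- `α + β = 1` and `α (x₀ - y) + β (x₁ - y) = 0`: the interpolant reproduces affine functions
  have hsplit : f x₀ * α + f x₁ * β - f y = α * r₀ + β * r₁ := by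
    simp only [α, β, r₀, r₁]; field_simp; ring
  calc |f x₀ * α + f x₁ * β - f y| ≤ α * |r₀| + β * |r₁| := by
        rw [hsplit]
        refine (abs_add_le _ _).trans ?_
        rw [abs_mul, abs_mul, abs_of_nonneg hα, abs_of_nonneg hβ]
    _ ≤ α * (M * (x₀ - y) ^ 2) + β * (M * (x₁ - y) ^ 2) :=
        add_le_add (mul_le_mul_of_nonneg_left (abs_sub_sub_deriv_mul_le hf hf' y x₀) hα)
          (mul_le_mul_of_nonneg_left (abs_sub_sub_deriv_mul_le hf hf' y x₁) hβ)
    _ = M * (x₁ - y) * (y - x₀) := by simp only [α, β]; field_simp; ring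

lemma mul_sub_le_mul_abs_sub_of_notMem_Ioo {x₀ x₁ y x : ℝ} (h₀ : x₀ ≤ y) (h₁ : y ≤ x₁)
    (hx : x ∉ Ioo x₀ x₁) : (x₁ - y) * (y - x₀) ≤ (x₁ - x₀) * |x - y| := by
  rcases le_or_gt x x₀ with hle | hgt
  · calc (x₁ - y) * (y - x₀) ≤ (x₁ - x₀) * (y - x) := by nlinarith
      _ ≤ (x₁ - x₀) * |x - y| := by
        gcongr
        · linarith
        · rw [abs_sub_comm]; exact le_abs_self _
  · have hx₁ : x₁ ≤ x := by by_contra! h; exact hx ⟨hgt, h⟩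
    calc (x₁ - y) * (y - x₀) ≤ (x - y) * (x₁ - x₀) := by nlinarith
      _ ≤ (x₁ - x₀) * |x - y| := by
        rw [mul_comm]
        gcongr
        · linarith
        · exact le_abs_self _

lemma floor_div_mul_le (y : ℝ) {h : ℝ} (hh : 0 < h) : (⌊y / h⌋ : ℝ) * h ≤ y :=
  (le_div_iff₀ hh).1 (Int.floor_le _)

lemma lt_floor_div_add_one_mul (y : ℝ) {h : ℝ} (hh : 0 < h) : y < ((⌊y / h⌋ : ℝ) + 1) * h :=
  (div_lt_iff₀ hh).1 (Int.lt_floor_add_one _)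

lemma intCast_mul_notMem_Ioo {h : ℝ} (hh : 0 < h) (i j : ℤ) :
    (i : ℝ) * h ∉ Ioo ((j : ℝ) * h) (((j : ℝ) + 1) * h) := by
  rintro ⟨hlo, hhi⟩
  have hji : j < i := by exact_mod_cast lt_of_mul_lt_mul_right hlo hh.le
  have hij : i < j + 1 := by exact_mod_cast lt_of_mul_lt_mul_right hhi hh.le
  omega

lemma abs_linInterp_sub_le_of_notMem_Ioo {ζ : ℝ → ℝ} {M : ℝ} (hζ : Differentiable ℝ ζ)
    (hζ' : ∀ s t, |deriv ζ s - deriv ζ t| ≤ M * |s - t|) {h : ℝ} (hh : 0 < h) (x y : ℝ)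
    (hx : x ∉ Ioo ((⌊y / h⌋ : ℝ) * h) (((⌊y / h⌋ : ℝ) + 1) * h)) :
    |linInterp h ζ y - ζ y| ≤ M * h * |x - y| := by
  have hM : 0 ≤ M := by simpa using (abs_nonneg _).trans (hζ' 1 0)
  set x₀ := (⌊y / h⌋ : ℝ) * h
  set x₁ := ((⌊y / h⌋ : ℝ) + 1) * h
  have hlen : x₁ - x₀ = h := by ring
  have h₀ : x₀ ≤ y := floor_div_mul_le y hh
  have h₁ : y ≤ x₁ := (lt_floor_div_add_one_mul y hh).le
  have hcell := abs_interp_sub_le hζ hζ' (by linarith : x₀ < x₁) h₀ h₁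
  rw [hlen] at hcell
  calc |linInterp h ζ y - ζ y| ≤ M * (x₁ - y) * (y - x₀) := hcell
    _ = M * ((x₁ - y) * (y - x₀)) := by ring
    _ ≤ M * ((x₁ - x₀) * |x - y|) :=
        mul_le_mul_of_nonneg_left (mul_sub_le_mul_abs_sub_of_notMem_Ioo h₀ h₁ hx) hM
    _ = M * h * |x - y| := by rw [hlen, mul_assoc]

/-- Linear interpolation error at an upwind point gains a factor `Δt`:
for `ζ ∈ C²`, grid node `x_i = i·h ∈ [0,a]`, `|u| ≤ U^∞`, and upwind point
`y = x_i − Δt·u ∈ [0,a]`, one has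
`|(Π_h^{(1)}ζ)(y) − ζ(y)| ≤ C·U^∞·Δt·h·‖ζ‖_{C²}` with `C` independent of
`h`, `Δt`, `u`; consequently `(1/Δt)|(Π_h^{(1)}ζ)(y) − ζ(y)| = O(h)`. -/
theorem linear_interp_upwind_gain :
    ∃ C > (0 : ℝ), ∀ (a h Δt u Uinf M : ℝ) (i : ℤ) (ζ : ℝ → ℝ),
      0 < h → 0 < Δt → |u| ≤ Uinf →
      ContDiff ℝ 2 ζ →
      (∀ s : ℝ, |ζ s| ≤ M ∧ |deriv ζ s| ≤ M ∧ |deriv (deriv ζ) s| ≤ M) →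
      (i : ℝ) * h ∈ Set.Icc (0 : ℝ) a →
      (i : ℝ) * h - Δt * u ∈ Set.Icc (0 : ℝ) a →
      |linInterp h ζ ((i : ℝ) * h - Δt * u) - ζ ((i : ℝ) * h - Δt * u)|
          ≤ C * Uinf * Δt * h * M ∧
      (1 / Δt) * |linInterp h ζ ((i : ℝ) * h - Δt * u) - ζ ((i : ℝ) * h - Δt * u)|
          ≤ C * Uinf * h * M := by
  refine ⟨1, one_pos, fun a h Δt u Uinf M i ζ hh hΔt hu hζ hM _ _ => ?_⟩
  set y := (i : ℝ) * h - Δt * u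
  have hM₀ : 0 ≤ M := (abs_nonneg _).trans (hM 0).1
  have hζ' : ∀ s t, |deriv ζ s - deriv ζ t| ≤ M * |s - t| :=
    abs_sub_le_of_abs_deriv_le hζ.differentiable_deriv_two fun s => (hM s).2.2
  have hdist : |(i : ℝ) * h - y| ≤ Δt * Uinf := by
    simpa [y, abs_mul, abs_of_pos hΔt] using mul_le_mul_of_nonneg_left hu hΔt.le
  have hgain : |linInterp h ζ y - ζ y| ≤ 1 * Uinf * Δt * h * M :=
    calc |linInterp h ζ y - ζ y| ≤ M * h * |(i : ℝ) * h - y| :=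
          abs_linInterp_sub_le_of_notMem_Ioo (hζ.differentiable two_ne_zero) hζ' hh _ y
            (intCast_mul_notMem_Ioo hh i _)
      _ ≤ M * h * (Δt * Uinf) := by gcongr
      _ = 1 * Uinf * Δt * h * M := by ring
  refine ⟨hgain, ?_⟩
  calc 1 / Δt * |linInterp h ζ y - ζ y| ≤ 1 / Δt * (1 * Uinf * Δt * h * M) := by gcongr
    _ = 1 * Uinf * h * M := by field_simp
end

section
/- One-dimensional first-order GLD step formula: in d = 1, the first step of the scheme reads ζ¹_i = (1 + Δt·(∂u/∂x)(x_i, t¹))² · (Π_h^{(p)} ζ_h⁰)(x_i − Δt·u(x_i,t¹)) + Δt·F(x_i, t¹), and if ζ⁰, F are exact data of a smooth solution ζ of ζ̌ = F, then ζ¹_i = ζ(x_i, t¹) + O(Δt² + Δt·h^p) for each interior lattice point x_i. -/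
/-- Piecewise quadratic Lagrange interpolation on the uniform grid of size `h`
(on cells `[2k₀h, (2k₀+2)h]` with nodes `2k₀h, (2k₀+1)h, (2k₀+2)h`). -/
noncomputable def quadInterp (h : ℝ) (ζ : ℝ → ℝ) (y : ℝ) : ℝ :=
  let k0 : ℤ := ⌊y / (2 * h)⌋
  let x0 : ℝ := 2 * (k0 : ℝ) * h
  let x1 : ℝ := x0 + h
  let x2 : ℝ := x0 + 2 * h
  ζ x0 * ((x1 - y) * (x2 - y) / (2 * h ^ 2))
    + ζ x1 * ((y - x0) * (x2 - y) / h ^ 2)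
    + ζ x2 * ((y - x0) * (y - x1) / (2 * h ^ 2))

/-- The Lagrange interpolation operator `Π_h^{(p)}` of order `p = 1, 2`. -/
noncomputable def interp (p : ℕ) (h : ℝ) (ζ : ℝ → ℝ) (y : ℝ) : ℝ :=
  if p = 1 then linInterp h ζ y else quadInterp h ζ y

/-- The one-dimensional upper-convected time derivative
`ζ̌ = ∂ζ/∂t + u ∂ζ/∂x − 2 (∂u/∂x) ζ`. -/
noncomputable def ucd1 (u ζ : ℝ → ℝ → ℝ) (x t : ℝ) : ℝ :=
  deriv (fun τ => ζ x τ) t + u x t * deriv (fun z => ζ z t) x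
    - 2 * deriv (fun z => u z t) x * ζ x t


open scoped ContDiff


lemma mvt_bound_s18 {f f' : ℝ → ℝ} {C y z : ℝ}
    (hf : ∀ t ∈ Set.uIcc y z, HasDerivAt f (f' t) t)
    (hC : ∀ t ∈ Set.uIcc y z, |f' t| ≤ C) :
    |f z - f y| ≤ C * |z - y| := by
  have := Convex.norm_image_sub_le_of_norm_hasDerivWithin_le
    (f := f) (f' := f') (s := Set.uIcc y z)
    (fun t ht => (hf t ht).hasDerivWithinAt) hC (convex_uIcc y z)
    Set.left_mem_uIcc Set.right_mem_uIcc
  simpa [Real.norm_eq_abs] using this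

lemma pd2_hasDerivAt {f : ℝ × ℝ → ℝ} (hf : ContDiff ℝ ∞ f) (x t : ℝ) :
    HasDerivAt (fun τ => f (x, τ)) (fderiv ℝ f (x, t) (0, 1)) t := by
  have h1 : HasDerivAt (fun τ : ℝ => ((x, τ) : ℝ × ℝ)) ((0 : ℝ), (1 : ℝ)) t :=
    (hasDerivAt_const t x).prodMk (hasDerivAt_id t)
  exact ((hf.differentiable (by simp) (x, t)).hasFDerivAt.comp_hasDerivAt t h1)

lemma pd1_hasDerivAt {f : ℝ × ℝ → ℝ} (hf : ContDiff ℝ ∞ f) (x t : ℝ) :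
    HasDerivAt (fun z => f (z, t)) (fderiv ℝ f (x, t) (1, 0)) x := by
  have h1 : HasDerivAt (fun z : ℝ => ((z, t) : ℝ × ℝ)) ((1 : ℝ), (0 : ℝ)) x :=
    (hasDerivAt_id x).prodMk (hasDerivAt_const x t)
  exact ((hf.differentiable (by simp) (x, t)).hasFDerivAt.comp_hasDerivAt x h1)

lemma smooth_pd {f : ℝ × ℝ → ℝ} (hf : ContDiff ℝ ∞ f) (v : ℝ × ℝ) :
    ContDiff ℝ ∞ (fun q => fderiv ℝ f q v) :=
  (hf.fderiv_right (by simp)).clm_apply contDiff_const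

lemma abs_sub_le_of_mem_uIcc {y z w : ℝ} (hw : w ∈ Set.uIcc y z) : |w - y| ≤ |z - y| := by
  rcases le_total y z with h | h
  · rw [Set.uIcc_of_le h] at hw
    rw [abs_of_nonneg (by linarith [hw.1]), abs_of_nonneg (by linarith)]
    linarith [hw.2]
  · rw [Set.uIcc_of_ge h] at hw
    rw [abs_of_nonpos (by linarith [hw.2]), abs_of_nonpos (by linarith)]
    linarith [hw.1]

lemma mem_window {y z w c : ℝ} (hw : w ∈ Set.uIcc y z) (hz : |z - y| ≤ c) :
    w ∈ Set.Icc (y - c) (y + c) := by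
  have h1 := abs_sub_le_of_mem_uIcc hw
  have h2 := abs_le.mp (h1.trans hz)
  constructor <;> linarith [h2.1, h2.2]

lemma taylor2_bound {f : ℝ → ℝ} (hf : ContDiff ℝ ∞ f) {y z M : ℝ}
    (hM : ∀ w ∈ Set.uIcc y z, |deriv (deriv f) w| ≤ M) :
    |f z - f y - deriv f y * (z - y)| ≤ M * |z - y| * |z - y| := by
  set R : ℝ → ℝ := fun w => f w - f y - deriv f y * (w - y) with hR
  have hR' : ∀ w, HasDerivAt R (deriv f w - deriv f y) w := by
    intro w
    have h1 : HasDerivAt f (deriv f w) w :=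
      (hf.differentiable (by simp) w).hasDerivAt
    have h2 : HasDerivAt (fun w => deriv f y * (w - y)) (deriv f y * 1) w :=
      ((hasDerivAt_id w).sub_const y).const_mul (deriv f y)
    have h3 := (h1.sub_const (f y)).sub h2
    rw [mul_one] at h3
    exact h3
  have hd1 : Differentiable ℝ (deriv f) :=
    ((contDiff_infty_iff_deriv.mp hf).2).differentiable (by simp)
  have hb : ∀ w ∈ Set.uIcc y z, |deriv f w - deriv f y| ≤ M * |z - y| := by
    intro w hw
    have hsub : Set.uIcc y w ⊆ Set.uIcc y z :=
      Set.uIcc_subset_uIcc Set.left_mem_uIcc hw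
    have h1 := mvt_bound_s18 (f := deriv f) (f' := deriv (deriv f))
      (fun t _ => (hd1 t).hasDerivAt) (fun t ht => hM t (hsub ht))
    have h2 := abs_sub_le_of_mem_uIcc hw
    have hM0 : 0 ≤ M := (abs_nonneg _).trans (hM y Set.left_mem_uIcc)
    nlinarith [abs_nonneg (w - y), abs_nonneg (z - y)]
  have := mvt_bound_s18 (f := R) (f' := fun w => deriv f w - deriv f y)
    (fun t _ => hR' t) hb
  simpa [hR] using this

lemma taylor3_bound {f : ℝ → ℝ} (hf : ContDiff ℝ ∞ f) {y z M : ℝ}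
    (hM : ∀ w ∈ Set.uIcc y z, |deriv (deriv (deriv f)) w| ≤ M) :
    |f z - f y - deriv f y * (z - y) - deriv (deriv f) y * (z - y) ^ 2 / 2|
      ≤ M * |z - y| * |z - y| * |z - y| := by
  set R : ℝ → ℝ :=
    fun w => f w - f y - deriv f y * (w - y) - deriv (deriv f) y * (w - y) ^ 2 / 2 with hR
  have hf' : ContDiff ℝ ∞ (deriv f) := (contDiff_infty_iff_deriv.mp hf).2
  have hR' : ∀ w, HasDerivAt R
      (deriv f w - deriv f y - deriv (deriv f) y * (w - y)) w := by
    intro w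
    have h1 : HasDerivAt f (deriv f w) w :=
      (hf.differentiable (by simp) w).hasDerivAt
    have h2 : HasDerivAt (fun w => deriv f y * (w - y)) (deriv f y * 1) w :=
      ((hasDerivAt_id w).sub_const y).const_mul (deriv f y)
    have h3 : HasDerivAt (fun w : ℝ => (w - y) ^ 2) (2 * (w - y) ^ 1 * 1) w :=
      ((hasDerivAt_id w).sub_const y).pow 2
    have h4 : HasDerivAt (fun w => deriv (deriv f) y * (w - y) ^ 2 / 2)
        (deriv (deriv f) y * (2 * (w - y) ^ 1 * 1) / 2) w :=
      (h3.const_mul (deriv (deriv f) y)).div_const 2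
    have h5 := ((h1.sub_const (f y)).sub h2).sub h4
    exact h5.congr_deriv (by ring)
  have hb : ∀ w ∈ Set.uIcc y z,
      |deriv f w - deriv f y - deriv (deriv f) y * (w - y)| ≤ M * |z - y| * |z - y| := by
    intro w hw
    have hsub : Set.uIcc y w ⊆ Set.uIcc y z :=
      Set.uIcc_subset_uIcc Set.left_mem_uIcc hw
    have h1 := taylor2_bound (f := deriv f) hf' (z := w)
      (fun t ht => hM t (hsub ht))
    have h2 := abs_sub_le_of_mem_uIcc hw
    have hM0 : 0 ≤ M := (abs_nonneg _).trans (hM y Set.left_mem_uIcc)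
    have h3 : |w - y| * |w - y| ≤ |z - y| * |z - y| :=
      mul_le_mul h2 h2 (abs_nonneg _) (abs_nonneg _)
    nlinarith [mul_le_mul_of_nonneg_left h3 hM0]
  have := mvt_bound_s18 (f := R)
    (f' := fun w => deriv f w - deriv f y - deriv (deriv f) y * (w - y))
    (fun t _ => hR' t) hb
  simpa [hR] using this

set_option maxHeartbeats 2000000 in
lemma lin_err {f : ℝ → ℝ} (hf : ContDiff ℝ ∞ f) {h y x M : ℝ} (hh : 0 < h)
    (hM : ∀ w ∈ Set.Icc (y - 2 * h) (y + 2 * h), |deriv (deriv f) w| ≤ M)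
    {i : ℤ} (hxn : x = (i : ℝ) * h) :
    |linInterp h f y - f y| ≤ M * h * |y - x| := by
  have hM0 : 0 ≤ M := (abs_nonneg _).trans (hM y (by constructor <;> nlinarith))
  set i0 : ℤ := ⌊y / h⌋ with hi0
  set x0 : ℝ := (i0 : ℝ) * h with hx0
  have hy0 : x0 ≤ y := by
    have := Int.floor_le (y / h)
    calc x0 ≤ (y / h) * h := by exact mul_le_mul_of_nonneg_right this hh.le
    _ = y := by field_simp
  have hy1 : y ≤ x0 + h := by
    have := (Int.lt_floor_add_one (y / h)).le
    calc y = (y / h) * h := by field_simp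
    _ ≤ ((i0 : ℝ) + 1) * h := mul_le_mul_of_nonneg_right this hh.le
    _ = x0 + h := by ring
  set R0 : ℝ := f x0 - f y - deriv f y * (x0 - y) with hR0
  set R1 : ℝ := f (x0 + h) - f y - deriv f y * (x0 + h - y) with hR1
  have hid : linInterp h f y - f y
      = R0 * ((x0 + h - y) / h) + R1 * ((y - x0) / h) := by
    show (f ((i0 : ℝ) * h) * ((((i0 : ℝ) + 1) * h - y) / h)
      + f (((i0 : ℝ) + 1) * h) * ((y - (i0 : ℝ) * h) / h)) - f y = _
    have e1 : ((i0 : ℝ) + 1) * h = x0 + h := by rw [hx0]; ring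
    rw [e1, hR0, hR1, ← hx0]
    field_simp
    ring
  -- Taylor bounds
  have hb0 : |R0| ≤ M * |x0 - y| * |x0 - y| := by
    apply taylor2_bound hf
    intro w hw
    exact hM w (mem_window hw (by rw [abs_of_nonpos (by linarith)]; linarith))
  have hb1 : |R1| ≤ M * |x0 + h - y| * |x0 + h - y| := by
    apply taylor2_bound hf
    intro w hw
    exact hM w (mem_window hw (by rw [abs_of_nonneg (by linarith)]; linarith))
  have e0 : |x0 - y| = y - x0 := by rw [abs_of_nonpos (by linarith)]; ring
  have e1 : |x0 + h - y| = x0 + h - y := abs_of_nonneg (by linarith)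
  rw [e0] at hb0
  rw [e1] at hb1
  -- combine
  have hw0 : (0:ℝ) ≤ (x0 + h - y) / h := div_nonneg (by linarith) hh.le
  have hw1 : (0:ℝ) ≤ (y - x0) / h := div_nonneg (by linarith) hh.le
  have habs : |linInterp h f y - f y|
      ≤ (M * (y - x0) * (y - x0)) * ((x0 + h - y) / h)
        + (M * (x0 + h - y) * (x0 + h - y)) * ((y - x0) / h) := by
    rw [hid]
    refine (abs_add_le _ _).trans ?_
    rw [abs_mul, abs_mul, abs_of_nonneg hw0, abs_of_nonneg hw1]
    have hc0 := mul_le_mul_of_nonneg_right hb0 hw0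
    have hc1 := mul_le_mul_of_nonneg_right hb1 hw1
    linarith
  have hkey : (M * (y - x0) * (y - x0)) * ((x0 + h - y) / h)
        + (M * (x0 + h - y) * (x0 + h - y)) * ((y - x0) / h)
      = M * (y - x0) * (x0 + h - y) := by
    field_simp
    ring
  rw [hkey] at habs
  refine habs.trans ?_
  -- nearest node
  rcases le_or_gt x y with hxy | hxy
  · have hix : (i : ℤ) ≤ i0 := by
      rw [hi0]
      apply Int.le_floor.mpr
      rw [le_div_iff₀ hh]
      linarith [hxn ▸ hxy]
    have hxx0 : x ≤ x0 := by
      rw [hxn, hx0]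
      exact mul_le_mul_of_nonneg_right (by exact_mod_cast hix) hh.le
    rw [abs_of_nonneg (by linarith)]
    have h1 : (y - x0) * (x0 + h - y) ≤ (y - x) * h :=
      mul_le_mul (by linarith) (by linarith) (by linarith) (by linarith)
    calc M * (y - x0) * (x0 + h - y) = M * ((y - x0) * (x0 + h - y)) := by ring
      _ ≤ M * ((y - x) * h) := mul_le_mul_of_nonneg_left h1 hM0
      _ = M * h * (y - x) := by ring
  · have hix : i0 < (i : ℤ) := by
      rw [hi0]
      apply Int.floor_lt.mpr
      rw [div_lt_iff₀ hh]
      linarith [hxn ▸ hxy]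
    have hxx1 : x0 + h ≤ x := by
      have : (i0 : ℝ) + 1 ≤ (i : ℝ) := by exact_mod_cast hix
      rw [hxn, hx0]
      nlinarith
    rw [abs_of_neg (by linarith)]
    have h1 : (y - x0) * (x0 + h - y) ≤ h * (x - y) :=
      mul_le_mul (by linarith) (by linarith) (by linarith) hh.le
    calc M * (y - x0) * (x0 + h - y) = M * ((y - x0) * (x0 + h - y)) := by ring
      _ ≤ M * (h * (x - y)) := mul_le_mul_of_nonneg_left h1 hM0
      _ = M * h * -(y - x) := by ring

set_option maxHeartbeats 2000000 in
lemma quad_err {f : ℝ → ℝ} (hf : ContDiff ℝ ∞ f) {h y x M : ℝ} (hh : 0 < h)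
    (hM : ∀ w ∈ Set.Icc (y - 2 * h) (y + 2 * h), |deriv (deriv (deriv f)) w| ≤ M)
    {i : ℤ} (hxn : x = (i : ℝ) * h) :
    |quadInterp h f y - f y| ≤ 32 * M * h ^ 2 * |y - x| := by
  have hM0 : 0 ≤ M := (abs_nonneg _).trans (hM y (by constructor <;> linarith))
  have h2h : (0:ℝ) < 2 * h := by linarith
  set k0 : ℤ := ⌊y / (2 * h)⌋ with hk0
  set x0 : ℝ := 2 * (k0 : ℝ) * h with hx0
  have hy0 : x0 ≤ y := by
    have := Int.floor_le (y / (2 * h))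
    calc x0 = (k0 : ℝ) * (2 * h) := by ring
    _ ≤ (y / (2 * h)) * (2 * h) := mul_le_mul_of_nonneg_right this h2h.le
    _ = y := by field_simp
  have hy2 : y < x0 + 2 * h := by
    have := Int.lt_floor_add_one (y / (2 * h))
    have h2 : y / (2 * h) * (2 * h) < ((k0 : ℝ) + 1) * (2 * h) :=
      mul_lt_mul_of_pos_right this h2h
    rw [div_mul_cancel₀ _ h2h.ne'] at h2
    linarith
  set x1 : ℝ := x0 + h with hx1
  set x2 : ℝ := x0 + 2 * h with hx2
  set R0 : ℝ := f x0 - f y - deriv f y * (x0 - y) - deriv (deriv f) y * (x0 - y) ^ 2 / 2 with hR0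
  set R1 : ℝ := f x1 - f y - deriv f y * (x1 - y) - deriv (deriv f) y * (x1 - y) ^ 2 / 2 with hR1
  set R2 : ℝ := f x2 - f y - deriv f y * (x2 - y) - deriv (deriv f) y * (x2 - y) ^ 2 / 2 with hR2
  have hid : quadInterp h f y - f y
      = R0 * ((x1 - y) * (x2 - y) / (2 * h ^ 2))
        + R1 * ((y - x0) * (x2 - y) / h ^ 2)
        + R2 * ((y - x0) * (y - x1) / (2 * h ^ 2)) := by
    show (f x0 * ((x1 - y) * (x2 - y) / (2 * h ^ 2))
      + f x1 * ((y - x0) * (x2 - y) / h ^ 2)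
      + f x2 * ((y - x0) * (y - x1) / (2 * h ^ 2))) - f y = _
    rw [hR0, hR1, hR2, hx1, hx2]
    field_simp
    ring
  -- Taylor bounds
  set A : ℝ := |x0 - y| with hA
  set B : ℝ := |x1 - y| with hB
  set Cc : ℝ := |x2 - y| with hCc
  have hA0 : 0 ≤ A := abs_nonneg _
  have hB0 : 0 ≤ B := abs_nonneg _
  have hC0 : 0 ≤ Cc := abs_nonneg _
  have hAle : A ≤ 2 * h := by rw [hA, abs_of_nonpos (by linarith)]; linarith
  have hBle : B ≤ h := by
    rw [hB, abs_le]; constructor <;> [linarith; linarith]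
  have hCle : Cc ≤ 2 * h := by rw [hCc, abs_of_nonneg (by linarith)]; linarith
  have hb0 : |R0| ≤ M * A * A * A := by
    refine taylor3_bound hf (fun w hw => hM w (mem_window hw (by rw [← hA]; linarith)))
  have hb1 : |R1| ≤ M * B * B * B := by
    refine taylor3_bound hf (fun w hw => hM w (mem_window hw (by rw [← hB]; linarith)))
  have hb2 : |R2| ≤ M * Cc * Cc * Cc := by
    refine taylor3_bound hf (fun w hw => hM w (mem_window hw (by rw [← hCc]; linarith)))
  -- assemble
  have e0 : |R0 * ((x1 - y) * (x2 - y) / (2 * h ^ 2))| = |R0| * (B * Cc) / (2 * h ^ 2) := by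
    rw [abs_mul, abs_div, abs_mul, abs_of_pos (by positivity : (0:ℝ) < 2 * h ^ 2)]
    rw [← hB, ← hCc]; ring
  have e1 : |R1 * ((y - x0) * (x2 - y) / h ^ 2)| = |R1| * (A * Cc) / h ^ 2 := by
    rw [abs_mul, abs_div, abs_mul, abs_of_pos (by positivity : (0:ℝ) < h ^ 2)]
    rw [abs_sub_comm y x0, ← hA, ← hCc]; ring
  have e2 : |R2 * ((y - x0) * (y - x1) / (2 * h ^ 2))| = |R2| * (A * B) / (2 * h ^ 2) := by
    rw [abs_mul, abs_div, abs_mul, abs_of_pos (by positivity : (0:ℝ) < 2 * h ^ 2)]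
    rw [abs_sub_comm y x0, abs_sub_comm y x1, ← hA, ← hB]; ring
  have hA2 : A * A ≤ 4 * h ^ 2 := by
    calc A * A ≤ (2 * h) * (2 * h) := mul_le_mul hAle hAle hA0 (by linarith)
    _ = 4 * h ^ 2 := by ring
  have hB2 : B * B ≤ h ^ 2 := by
    calc B * B ≤ h * h := mul_le_mul hBle hBle hB0 hh.le
    _ = h ^ 2 := by ring
  have hC2 : Cc * Cc ≤ 4 * h ^ 2 := by
    calc Cc * Cc ≤ (2 * h) * (2 * h) := mul_le_mul hCle hCle hC0 (by linarith)
    _ = 4 * h ^ 2 := by ring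
  set P : ℝ := M * (A * B * Cc) with hP
  have hP0 : 0 ≤ P := by positivity
  have n0 : |R0| * (B * Cc) ≤ 4 * h ^ 2 * P := by
    calc |R0| * (B * Cc) ≤ (M * A * A * A) * (B * Cc) :=
          mul_le_mul_of_nonneg_right hb0 (by positivity)
    _ = (A * A) * P := by rw [hP]; ring
    _ ≤ (4 * h ^ 2) * P := mul_le_mul_of_nonneg_right hA2 hP0
  have n1 : |R1| * (A * Cc) ≤ h ^ 2 * P := by
    calc |R1| * (A * Cc) ≤ (M * B * B * B) * (A * Cc) :=
          mul_le_mul_of_nonneg_right hb1 (by positivity)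
    _ = (B * B) * P := by rw [hP]; ring
    _ ≤ h ^ 2 * P := mul_le_mul_of_nonneg_right hB2 hP0
  have n2 : |R2| * (A * B) ≤ 4 * h ^ 2 * P := by
    calc |R2| * (A * B) ≤ (M * Cc * Cc * Cc) * (A * B) :=
          mul_le_mul_of_nonneg_right hb2 (by positivity)
    _ = (Cc * Cc) * P := by rw [hP]; ring
    _ ≤ (4 * h ^ 2) * P := mul_le_mul_of_nonneg_right hC2 hP0
  have ht : |quadInterp h f y - f y| ≤ 5 * P := by
    rw [hid]
    calc |R0 * ((x1 - y) * (x2 - y) / (2 * h ^ 2))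
          + R1 * ((y - x0) * (x2 - y) / h ^ 2)
          + R2 * ((y - x0) * (y - x1) / (2 * h ^ 2))|
        ≤ |R0 * ((x1 - y) * (x2 - y) / (2 * h ^ 2))|
          + |R1 * ((y - x0) * (x2 - y) / h ^ 2)|
          + |R2 * ((y - x0) * (y - x1) / (2 * h ^ 2))| :=
          (abs_add_le _ _).trans (add_le_add (abs_add_le _ _) le_rfl)
    _ = |R0| * (B * Cc) / (2 * h ^ 2) + |R1| * (A * Cc) / h ^ 2
          + |R2| * (A * B) / (2 * h ^ 2) := by rw [e0, e1, e2]
    _ ≤ (4 * h ^ 2 * P) / (2 * h ^ 2) + (h ^ 2 * P) / h ^ 2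
          + (4 * h ^ 2 * P) / (2 * h ^ 2) := by gcongr
    _ = 5 * P := by field_simp; ring
  -- nearest node
  have hkey : A * B * Cc ≤ 4 * h ^ 2 * |y - x| := by
    set j0 : ℤ := ⌊y / h⌋ with hj0
    have h2k0 : 2 * k0 ≤ j0 := by
      rw [hj0]
      apply Int.le_floor.mpr
      rw [le_div_iff₀ hh]
      push_cast
      linarith [hy0]
    have hj0le : j0 ≤ 2 * k0 + 1 := by
      have : j0 < 2 * k0 + 2 := by
        rw [hj0]
        apply Int.floor_lt.mpr
        rw [div_lt_iff₀ hh]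
        push_cast
        linarith [hy2]
      omega
    rcases le_or_gt x y with hxy | hxy
    · have hij : (i : ℤ) ≤ j0 := by
        rw [hj0]
        apply Int.le_floor.mpr
        rw [le_div_iff₀ hh]
        linarith [hxn ▸ hxy]
      have hxj0 : x ≤ (j0 : ℝ) * h := by
        rw [hxn]
        exact mul_le_mul_of_nonneg_right (by exact_mod_cast hij) hh.le
      have hj0y : (j0 : ℝ) * h ≤ y := by
        have := Int.floor_le (y / h)
        calc (j0 : ℝ) * h ≤ y / h * h := mul_le_mul_of_nonneg_right this hh.le
        _ = y := by field_simp
      have hcases : j0 = 2 * k0 ∨ j0 = 2 * k0 + 1 := by omega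
      rcases hcases with hc | hc
      · have hx0j : (j0 : ℝ) * h = x0 := by rw [hx0, hc]; push_cast; ring
        have hAx : A ≤ |y - x| := by
          rw [hA, abs_of_nonpos (by linarith), abs_of_nonneg (by linarith)]
          linarith [hx0j ▸ hxj0, hx0j ▸ hj0y]
        calc A * B * Cc ≤ |y - x| * B * Cc := by gcongr
        _ ≤ |y - x| * h * (2 * h) := by gcongr <;> positivity
        _ = 2 * (h ^ 2 * |y - x|) := by ring
        _ ≤ 4 * (h ^ 2 * |y - x|) := by
            have h9 : (0:ℝ) ≤ h ^ 2 * |y - x| := by positivity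
            linarith
        _ = 4 * h ^ 2 * |y - x| := by ring
      · have hx1j : (j0 : ℝ) * h = x1 := by rw [hx1, hx0, hc]; push_cast; ring
        have hBx : B ≤ |y - x| := by
          rw [hB, abs_of_nonpos (by linarith [hx1j ▸ hj0y]), abs_of_nonneg (by linarith)]
          linarith [hx1j ▸ hxj0, hx1j ▸ hj0y]
        calc A * B * Cc ≤ (2 * h) * B * (2 * h) := by gcongr
        _ = 4 * h ^ 2 * B := by ring
        _ ≤ 4 * h ^ 2 * |y - x| := by gcongr
    · have hij : j0 < (i : ℤ) := by
        rw [hj0]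
        apply Int.floor_lt.mpr
        rw [div_lt_iff₀ hh]
        linarith [hxn ▸ hxy]
      have hxj1 : ((j0 : ℝ) + 1) * h ≤ x := by
        have : (j0 : ℝ) + 1 ≤ (i : ℝ) := by exact_mod_cast hij
        rw [hxn]
        exact mul_le_mul_of_nonneg_right this hh.le
      have hyj1 : y < ((j0 : ℝ) + 1) * h := by
        have := Int.lt_floor_add_one (y / h)
        have h2 : y / h * h < ((j0 : ℝ) + 1) * h := mul_lt_mul_of_pos_right this hh
        rw [div_mul_cancel₀ _ hh.ne'] at h2
        exact h2
      have hcases : j0 = 2 * k0 ∨ j0 = 2 * k0 + 1 := by omega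
      rcases hcases with hc | hc
      · have hx1j : ((j0 : ℝ) + 1) * h = x1 := by rw [hx1, hx0, hc]; push_cast; ring
        have hBx : B ≤ |y - x| := by
          rw [hB, abs_of_nonneg (by linarith [hx1j ▸ hyj1]), abs_of_nonpos (by linarith)]
          linarith [hx1j ▸ hxj1, hx1j ▸ hyj1]
        calc A * B * Cc ≤ (2 * h) * B * (2 * h) := by gcongr
        _ = 4 * h ^ 2 * B := by ring
        _ ≤ 4 * h ^ 2 * |y - x| := by gcongr
      · have hx2j : ((j0 : ℝ) + 1) * h = x2 := by rw [hx2, hx0, hc]; push_cast; ring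
        have hCx : Cc ≤ |y - x| := by
          rw [hCc, abs_of_nonneg (by linarith [hx2j ▸ hyj1]), abs_of_nonpos (by linarith)]
          linarith [hx2j ▸ hxj1, hx2j ▸ hyj1]
        calc A * B * Cc ≤ (2 * h) * (2 * h) * Cc := by gcongr <;> linarith
        _ = 4 * h ^ 2 * Cc := by ring
        _ ≤ 4 * h ^ 2 * |y - x| := by gcongr
  calc |quadInterp h f y - f y| ≤ 5 * P := ht
  _ = 5 * M * (A * B * Cc) := by rw [hP]; ring
  _ ≤ 5 * M * (4 * h ^ 2 * |y - x|) := by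
      apply mul_le_mul_of_nonneg_left hkey (by positivity)
  _ = 20 * (M * h ^ 2 * |y - x|) := by ring
  _ ≤ 32 * (M * h ^ 2 * |y - x|) := by
      have h9 : (0:ℝ) ≤ M * h ^ 2 * |y - x| := by positivity
      linarith
  _ = 32 * M * h ^ 2 * |y - x| := by ring

section
variable {u ζ : ℝ → ℝ → ℝ}

/-- partial derivatives -/
noncomputable def pdX (f : ℝ × ℝ → ℝ) (q : ℝ × ℝ) : ℝ := fderiv ℝ f q (1, 0)
noncomputable def pdT (f : ℝ × ℝ → ℝ) (q : ℝ × ℝ) : ℝ := fderiv ℝ f q (0, 1)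

/-- The transport comparison function. -/
noncomputable def Gaux (u ζ : ℝ → ℝ → ℝ) (q : ℝ × ℝ) : ℝ :=
  (1 + q.2 * pdX (fun r => u r.1 r.2) q) ^ 2 * ζ (q.1 - q.2 * u q.1 q.2) 0
    + q.2 * (pdT (fun r => ζ r.1 r.2) q + u q.1 q.2 * pdX (fun r => ζ r.1 r.2) q
        - 2 * pdX (fun r => u r.1 r.2) q * ζ q.1 q.2)
    - ζ q.1 q.2

lemma Gaux_smooth (hu : ContDiff ℝ ∞ (fun q : ℝ × ℝ => u q.1 q.2))
    (hζ : ContDiff ℝ ∞ (fun q : ℝ × ℝ => ζ q.1 q.2)) :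
    ContDiff ℝ ∞ (Gaux u ζ) := by
  have hζ0 : ContDiff ℝ ∞ (fun z : ℝ => ζ z 0) :=
    hζ.comp (contDiff_id.prodMk contDiff_const)
  have h1 : ContDiff ℝ ∞ (fun q : ℝ × ℝ => (1 + q.2 * pdX (fun r => u r.1 r.2) q) ^ 2) :=
    (contDiff_const.add (contDiff_snd.mul (smooth_pd hu (1, 0)))).pow 2
  have h2 : ContDiff ℝ ∞ (fun q : ℝ × ℝ => ζ (q.1 - q.2 * u q.1 q.2) 0) :=
    hζ0.comp (contDiff_fst.sub (contDiff_snd.mul hu))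
  have h3 : ContDiff ℝ ∞ (fun q : ℝ × ℝ =>
      pdT (fun r => ζ r.1 r.2) q + u q.1 q.2 * pdX (fun r => ζ r.1 r.2) q
        - 2 * pdX (fun r => u r.1 r.2) q * ζ q.1 q.2) :=
    ((smooth_pd hζ (0, 1)).add (hu.mul (smooth_pd hζ (1, 0)))).sub
      ((contDiff_const.mul (smooth_pd hu (1, 0))).mul hζ)
  exact ((h1.mul h2).add (contDiff_snd.mul h3)).sub hζ

lemma Gaux_zero (x : ℝ) : Gaux u ζ (x, 0) = 0 := by
  simp [Gaux]

lemma Gaux_pd_zero (hu : ContDiff ℝ ∞ (fun q : ℝ × ℝ => u q.1 q.2))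
    (hζ : ContDiff ℝ ∞ (fun q : ℝ × ℝ => ζ q.1 q.2)) (x : ℝ) :
    pdT (Gaux u ζ) (x, 0) = 0 := by
  set υ : ℝ × ℝ → ℝ := fun q => u q.1 q.2 with hυ
  set χ : ℝ × ℝ → ℝ := fun q => ζ q.1 q.2 with hχ
  -- t-derivatives of the pieces at t = 0
  have hA : HasDerivAt (fun t => pdX υ (x, t)) (fderiv ℝ (pdX υ) (x, 0) (0, 1)) 0 :=
    pd2_hasDerivAt (smooth_pd hu (1, 0)) x 0
  have hU : HasDerivAt (fun t => u x t) (fderiv ℝ υ (x, 0) (0, 1)) 0 :=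
    pd2_hasDerivAt hu x 0
  have hZ : HasDerivAt (fun t => ζ x t) (pdT χ (x, 0)) 0 :=
    pd2_hasDerivAt hζ x 0
  have hlin : HasDerivAt (fun t : ℝ => 1 + t * pdX υ (x, t)) (pdX υ (x, 0)) 0 := by
    have h1 := (hasDerivAt_id (0 : ℝ)).mul hA
    simpa using h1.const_add 1
  have hpow : HasDerivAt (fun t : ℝ => (1 + t * pdX υ (x, t)) ^ 2)
      (2 * pdX υ (x, 0)) 0 := by
    have h2 := hlin.pow 2
    norm_num at h2
    exact h2
  have hinner : HasDerivAt (fun t : ℝ => x - t * u x t) (-(u x 0)) 0 := by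
    have h1 := (hasDerivAt_id (0 : ℝ)).mul hU
    have h2 := h1.const_sub x
    simpa using h2
  have hζ0x : HasDerivAt (fun z => ζ z 0) (pdX χ (x, 0)) x := pd1_hasDerivAt hζ x 0
  have hpt : x - (0 : ℝ) * u x 0 = x := by ring
  have hcomp : HasDerivAt (fun t : ℝ => ζ (x - t * u x t) 0)
      (pdX χ (x, 0) * -(u x 0)) 0 := by
    have h0 : HasDerivAt (fun z => ζ z 0) (pdX χ (x, 0)) (x - (0:ℝ) * u x 0) := by
      rw [hpt]; exact hζ0x
    simpa [Function.comp_def] using h0.comp 0 hinner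
  have hprod := hpow.mul hcomp
  -- the bracket B
  have hB : HasDerivAt
      (fun t => pdT χ (x, t) + u x t * pdX χ (x, t) - 2 * pdX υ (x, t) * ζ x t)
      ((fderiv ℝ (pdT χ) (x, 0) (0, 1)
        + (fderiv ℝ υ (x, 0) (0, 1) * pdX χ (x, 0)
            + u x 0 * fderiv ℝ (pdX χ) (x, 0) (0, 1)))
        - ((2 * fderiv ℝ (pdX υ) (x, 0) (0, 1)) * ζ x 0
            + 2 * pdX υ (x, 0) * pdT χ (x, 0))) 0 := by
    have hBt : HasDerivAt (fun t => pdT χ (x, t)) (fderiv ℝ (pdT χ) (x, 0) (0, 1)) 0 :=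
      pd2_hasDerivAt (smooth_pd hζ (0, 1)) x 0
    have hBx : HasDerivAt (fun t => pdX χ (x, t)) (fderiv ℝ (pdX χ) (x, 0) (0, 1)) 0 :=
      pd2_hasDerivAt (smooth_pd hζ (1, 0)) x 0
    exact (hBt.add (hU.mul hBx)).sub ((hA.const_mul 2).mul hZ)
  have htB := (hasDerivAt_id (0 : ℝ)).mul hB
  have hfull := (hprod.add htB).sub hZ
  have hG : HasDerivAt (fun t => Gaux u ζ (x, t)) (pdT (Gaux u ζ) (x, 0)) 0 :=
    pd2_hasDerivAt (Gaux_smooth hu hζ) x 0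
  have huniq := hG.unique hfull
  rw [huniq]
  simp only [hpt, id_eq]
  ring

end

set_option maxHeartbeats 2000000 in
/-- One-dimensional first-order GLD step: with exact data `ζ⁰ = ζ(·,0)` and
`F = ζ̌` of a smooth solution `ζ` of `ζ̌ = F`, the first step
`ζ¹ᵢ = (1 + Δt·u_x(x_i,t¹))²·(Π_h^{(p)}ζ⁰)(x_i − Δt·u(x_i,t¹)) + Δt·F(x_i,t¹)`
satisfies `ζ¹ᵢ = ζ(x_i, t¹) + O(Δt² + Δt·h^p)` at interior lattice points. -/
theorem gld_first_step_1d (a T Ku : ℝ) (ha : 0 < a) (hT : 0 < T)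
    (u ζ : ℝ → ℝ → ℝ)
    (hu : ContDiff ℝ (⊤ : ℕ∞) (fun q : ℝ × ℝ => u q.1 q.2))
    (hζ : ContDiff ℝ (⊤ : ℕ∞) (fun q : ℝ × ℝ => ζ q.1 q.2))
    (hu0 : ∀ t : ℝ, u 0 t = 0 ∧ u a t = 0)
    (hKu : ∀ x ∈ Set.Icc (0:ℝ) a, ∀ t ∈ Set.Icc (0:ℝ) T,
      |u x t| ≤ Ku ∧ |deriv (fun z => u z t) x| ≤ Ku) :
    ∃ C > (0 : ℝ), ∀ (Δt h : ℝ) (N p i : ℕ),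
      0 < Δt → 0 < h → (N : ℝ) * h = a → Even N →
      Δt * Ku ≤ 1 / 8 → (p = 1 ∨ p = 2) → Δt ≤ T →
      0 < i → i < N →
      |((1 + Δt * deriv (fun z => u z Δt) ((i : ℝ) * h)) ^ 2 *
          interp p h (fun z => ζ z 0) ((i : ℝ) * h - Δt * u ((i : ℝ) * h) Δt)
          + Δt * ucd1 u ζ ((i : ℝ) * h) Δt)
        - ζ ((i : ℝ) * h) Δt|
        ≤ C * (Δt ^ 2 + Δt * h ^ p) := by
  have hu' : ContDiff ℝ ∞ (fun q : ℝ × ℝ => u q.1 q.2) := hu.of_le (by simp)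
  have hζ' : ContDiff ℝ ∞ (fun q : ℝ × ℝ => ζ q.1 q.2) := hζ.of_le (by simp)
  have hζ0 : ContDiff ℝ ∞ (fun z : ℝ => ζ z 0) :=
    hζ'.comp (contDiff_id.prodMk contDiff_const)
  have hd1 : ContDiff ℝ ∞ (deriv (fun z : ℝ => ζ z 0)) := (contDiff_infty_iff_deriv.mp hζ0).2
  have hd2 : ContDiff ℝ ∞ (deriv (deriv (fun z : ℝ => ζ z 0))) :=
    (contDiff_infty_iff_deriv.mp hd1).2
  have hd3 : Continuous (deriv (deriv (deriv (fun z : ℝ => ζ z 0)))) :=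
    ((contDiff_infty_iff_deriv.mp hd2).2).continuous
  obtain ⟨M2, hM2⟩ := (isCompact_Icc (a := -(a+1)) (b := 2*a+1)).exists_bound_of_continuousOn
    (hd2.continuous.continuousOn)
  obtain ⟨M3, hM3⟩ := (isCompact_Icc (a := -(a+1)) (b := 2*a+1)).exists_bound_of_continuousOn
    (hd3.continuousOn)
  have hGsm : ContDiff ℝ ∞ (Gaux u ζ) := Gaux_smooth hu' hζ'
  have hPGsm : ContDiff ℝ ∞ (pdT (Gaux u ζ)) := smooth_pd hGsm (0, 1)
  obtain ⟨MG, hMG⟩ := (isCompact_Icc (a := ((0:ℝ), (0:ℝ))) (b := (a, T))).exists_bound_of_continuousOn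
    ((smooth_pd hPGsm (0, 1)).continuous.continuousOn)
  have hKu0 : 0 ≤ Ku :=
    (abs_nonneg _).trans (hKu 0 ⟨le_refl 0, ha.le⟩ 0 ⟨le_refl 0, hT.le⟩).1
  set M2' : ℝ := max M2 0 with hM2'def
  set M3' : ℝ := max M3 0 with hM3'def
  set MG' : ℝ := max MG 0 with hMG'def
  have hM2'0 : 0 ≤ M2' := le_max_right _ _
  have hM3'0 : 0 ≤ M3' := le_max_right _ _
  have hMG'0 : 0 ≤ MG' := le_max_right _ _
  set C : ℝ := 4 * M2' * Ku + 128 * M3' * Ku + MG' + 1 with hCdef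
  have hc1 : 0 ≤ 4 * M2' * Ku := by positivity
  have hc2 : 0 ≤ 128 * M3' * Ku := by positivity
  have hC1 : 4 * M2' * Ku ≤ C := by rw [hCdef]; linarith
  have hC2 : 128 * M3' * Ku ≤ C := by rw [hCdef]; linarith
  have hC3 : MG' ≤ C := by rw [hCdef]; linarith
  refine ⟨C, by rw [hCdef]; linarith, ?_⟩
  intro Δt h N p i hΔt hh hNh _hNeven hCFL hp hΔtT hi0 hiN
  set x : ℝ := (i : ℝ) * h with hxdef
  have hx0 : 0 ≤ x := by positivity
  have hxa : x ≤ a := by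
    rw [hxdef, ← hNh]
    exact mul_le_mul_of_nonneg_right (by exact_mod_cast hiN.le) hh.le
  obtain ⟨hw, hwx⟩ := hKu x ⟨hx0, hxa⟩ Δt ⟨hΔt.le, hΔtT⟩
  have hN2 : 2 ≤ N := by omega
  have h2h : 2 * h ≤ a := by
    rw [← hNh]
    have : (2 : ℝ) ≤ (N : ℝ) := by exact_mod_cast hN2
    nlinarith
  have hyKu : |x - Δt * u x Δt - x| ≤ Δt * Ku := by
    have e : x - Δt * u x Δt - x = -(Δt * u x Δt) := by ring
    rw [e, abs_neg, abs_mul, abs_of_pos hΔt]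
    exact mul_le_mul_of_nonneg_left hw hΔt.le
  have hy8 : |x - Δt * u x Δt - x| ≤ 1 / 8 := hyKu.trans hCFL
  -- rewrite partial derivatives
  have e1 : deriv (fun τ => ζ x τ) Δt = pdT (fun q : ℝ × ℝ => ζ q.1 q.2) (x, Δt) :=
    (pd2_hasDerivAt hζ' x Δt).deriv
  have e2 : deriv (fun z => ζ z Δt) x = pdX (fun q : ℝ × ℝ => ζ q.1 q.2) (x, Δt) :=
    (pd1_hasDerivAt hζ' x Δt).deriv
  have e3 : deriv (fun z => u z Δt) x = pdX (fun q : ℝ × ℝ => u q.1 q.2) (x, Δt) :=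
    (pd1_hasDerivAt hu' x Δt).deriv
  simp only [ucd1]
  rw [e1, e2, e3]
  have hGval : Gaux u ζ (x, Δt)
      = (1 + Δt * pdX (fun q : ℝ × ℝ => u q.1 q.2) (x, Δt)) ^ 2 * ζ (x - Δt * u x Δt) 0
        + Δt * (pdT (fun q : ℝ × ℝ => ζ q.1 q.2) (x, Δt)
            + u x Δt * pdX (fun q : ℝ × ℝ => ζ q.1 q.2) (x, Δt)
            - 2 * pdX (fun q : ℝ × ℝ => u q.1 q.2) (x, Δt) * ζ x Δt)
        - ζ x Δt := rfl
  have hsplit : (1 + Δt * pdX (fun q : ℝ × ℝ => u q.1 q.2) (x, Δt)) ^ 2 *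
          interp p h (fun z => ζ z 0) (x - Δt * u x Δt)
        + Δt * (pdT (fun q : ℝ × ℝ => ζ q.1 q.2) (x, Δt)
            + u x Δt * pdX (fun q : ℝ × ℝ => ζ q.1 q.2) (x, Δt)
            - 2 * pdX (fun q : ℝ × ℝ => u q.1 q.2) (x, Δt) * ζ x Δt)
        - ζ x Δt
      = (1 + Δt * pdX (fun q : ℝ × ℝ => u q.1 q.2) (x, Δt)) ^ 2 *
          (interp p h (fun z => ζ z 0) (x - Δt * u x Δt) - ζ (x - Δt * u x Δt) 0)
        + Gaux u ζ (x, Δt) := by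
    rw [hGval]; ring
  rw [hsplit]
  -- Part B: |Gaux (x, Δt)| ≤ MG' Δt²
  have hmem : ∀ τ : ℝ, 0 ≤ τ → τ ≤ T →
      ((x, τ) : ℝ × ℝ) ∈ Set.Icc ((0:ℝ), (0:ℝ)) (a, T) := by
    intro τ h1 h2
    rw [Set.mem_Icc, Prod.mk_le_mk, Prod.mk_le_mk]
    exact ⟨⟨hx0, h1⟩, ⟨hxa, h2⟩⟩
  have step1 : ∀ t ∈ Set.uIcc (0:ℝ) Δt, |pdT (Gaux u ζ) (x, t)| ≤ MG' * Δt := by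
    intro t ht
    rw [Set.uIcc_of_le hΔt.le] at ht
    have hmvt := mvt_bound_s18 (f := fun τ => pdT (Gaux u ζ) (x, τ))
      (f' := fun τ => pdT (pdT (Gaux u ζ)) (x, τ)) (y := 0) (z := t)
      (fun τ _ => pd2_hasDerivAt hPGsm x τ)
      (fun τ hτ => by
        rw [Set.uIcc_of_le ht.1] at hτ
        have hq := hmem τ hτ.1 ((hτ.2.trans ht.2).trans hΔtT)
        have := hMG _ hq
        rw [Real.norm_eq_abs] at this
        exact this.trans (le_max_left MG 0))
    calc |pdT (Gaux u ζ) (x, t)|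
        = |pdT (Gaux u ζ) (x, t) - pdT (Gaux u ζ) (x, 0)| := by
          rw [Gaux_pd_zero hu' hζ' x, sub_zero]
    _ ≤ MG' * |t - 0| := hmvt
    _ = MG' * t := by rw [sub_zero, abs_of_nonneg ht.1]
    _ ≤ MG' * Δt := mul_le_mul_of_nonneg_left ht.2 hMG'0
  have partB : |Gaux u ζ (x, Δt)| ≤ MG' * Δt * Δt := by
    have hmvt := mvt_bound_s18 (f := fun t => Gaux u ζ (x, t))
      (f' := fun t => pdT (Gaux u ζ) (x, t)) (y := 0) (z := Δt)
      (fun t _ => pd2_hasDerivAt hGsm x t) step1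
    calc |Gaux u ζ (x, Δt)| = |Gaux u ζ (x, Δt) - Gaux u ζ (x, 0)| := by
          rw [Gaux_zero x, sub_zero]
    _ ≤ MG' * Δt * |Δt - 0| := hmvt
    _ = MG' * Δt * Δt := by rw [sub_zero, abs_of_pos hΔt]
  -- Part A: interpolation error
  have hwin : ∀ w ∈ Set.Icc (x - Δt * u x Δt - 2 * h) (x - Δt * u x Δt + 2 * h),
      w ∈ Set.Icc (-(a+1)) (2*a+1) := by
    intro w hw
    obtain ⟨h1, h2⟩ := hw
    have h3 := abs_le.mp hy8
    constructor <;> [linarith [h3.1]; linarith [h3.2]]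
  have hMd2 : ∀ w ∈ Set.Icc (x - Δt * u x Δt - 2 * h) (x - Δt * u x Δt + 2 * h),
      |deriv (deriv (fun z : ℝ => ζ z 0)) w| ≤ M2' := by
    intro w hw
    have := hM2 w (hwin w hw)
    rw [Real.norm_eq_abs] at this
    exact this.trans (le_max_left M2 0)
  have hMd3 : ∀ w ∈ Set.Icc (x - Δt * u x Δt - 2 * h) (x - Δt * u x Δt + 2 * h),
      |deriv (deriv (deriv (fun z : ℝ => ζ z 0))) w| ≤ M3' := by
    intro w hw
    have := hM3 w (hwin w hw)
    rw [Real.norm_eq_abs] at this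
    exact this.trans (le_max_left M3 0)
  have hxn : x = ((i : ℤ) : ℝ) * h := by rw [hxdef]; push_cast; ring
  -- squared factor ≤ 4
  have hfac : (1 + Δt * pdX (fun q : ℝ × ℝ => u q.1 q.2) (x, Δt)) ^ 2 ≤ 4 := by
    rw [← e3]
    have habs : |Δt * deriv (fun z => u z Δt) x| ≤ 1 / 8 := by
      rw [abs_mul, abs_of_pos hΔt]
      exact (mul_le_mul_of_nonneg_left hwx hΔt.le).trans hCFL
    have h4 := abs_le.mp habs
    nlinarith [h4.1, h4.2]
  -- combine
  have hIA : |interp p h (fun z => ζ z 0) (x - Δt * u x Δt) - ζ (x - Δt * u x Δt) 0|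
      ≤ (if p = 1 then M2' * Ku * (Δt * h) else 32 * M3' * Ku * (Δt * h ^ 2)) := by
    rcases hp with hp1 | hp2
    · subst hp1
      simp only [interp, if_pos rfl]
      have herr := lin_err hζ0 hh hMd2 hxn
      refine herr.trans ?_
      calc M2' * h * |x - Δt * u x Δt - x| ≤ M2' * h * (Δt * Ku) :=
            mul_le_mul_of_nonneg_left hyKu (by positivity)
      _ = M2' * Ku * (Δt * h) := by ring
    · subst hp2
      have h2ne : (2 : ℕ) ≠ 1 := by norm_num
      simp only [interp, if_neg h2ne]
      have herr := quad_err hζ0 hh hMd3 hxn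
      refine herr.trans ?_
      calc 32 * M3' * h ^ 2 * |x - Δt * u x Δt - x| ≤ 32 * M3' * h ^ 2 * (Δt * Ku) :=
            mul_le_mul_of_nonneg_left hyKu (by positivity)
      _ = 32 * M3' * Ku * (Δt * h ^ 2) := by ring
  calc |(1 + Δt * pdX (fun q : ℝ × ℝ => u q.1 q.2) (x, Δt)) ^ 2 *
          (interp p h (fun z => ζ z 0) (x - Δt * u x Δt) - ζ (x - Δt * u x Δt) 0)
        + Gaux u ζ (x, Δt)|
      ≤ |(1 + Δt * pdX (fun q : ℝ × ℝ => u q.1 q.2) (x, Δt)) ^ 2 *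
          (interp p h (fun z => ζ z 0) (x - Δt * u x Δt) - ζ (x - Δt * u x Δt) 0)|
        + |Gaux u ζ (x, Δt)| := abs_add_le _ _
  _ = (1 + Δt * pdX (fun q : ℝ × ℝ => u q.1 q.2) (x, Δt)) ^ 2 *
        |interp p h (fun z => ζ z 0) (x - Δt * u x Δt) - ζ (x - Δt * u x Δt) 0|
        + |Gaux u ζ (x, Δt)| := by rw [abs_mul, abs_of_nonneg (sq_nonneg _)]
  _ ≤ 4 * (if p = 1 then M2' * Ku * (Δt * h) else 32 * M3' * Ku * (Δt * h ^ 2))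
        + MG' * Δt * Δt := by
      refine add_le_add (mul_le_mul hfac hIA (abs_nonneg _) (by norm_num)) partB
  _ ≤ C * (Δt ^ 2 + Δt * h ^ p) := by
      rcases hp with hp1 | hp2
      · subst hp1
        rw [if_pos rfl, pow_one]
        have b1 : 4 * (M2' * Ku * (Δt * h)) = (4 * M2' * Ku) * (Δt * h) := by ring
        have b2 : (4 * M2' * Ku) * (Δt * h) ≤ C * (Δt * h) :=
          mul_le_mul_of_nonneg_right hC1 (by positivity)
        have b3 : MG' * Δt * Δt ≤ C * Δt ^ 2 := by
          have : MG' * Δt * Δt = MG' * Δt ^ 2 := by ring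
          rw [this]
          exact mul_le_mul_of_nonneg_right hC3 (by positivity)
        have : C * (Δt * h) + C * Δt ^ 2 = C * (Δt ^ 2 + Δt * h) := by ring
        linarith
      · subst hp2
        rw [if_neg (by norm_num : (2:ℕ) ≠ 1)]
        have b1 : 4 * (32 * M3' * Ku * (Δt * h ^ 2)) = (128 * M3' * Ku) * (Δt * h ^ 2) := by ring
        have b2 : (128 * M3' * Ku) * (Δt * h ^ 2) ≤ C * (Δt * h ^ 2) :=
          mul_le_mul_of_nonneg_right hC2 (by positivity)
        have b3 : MG' * Δt * Δt ≤ C * Δt ^ 2 := by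
          have : MG' * Δt * Δt = MG' * Δt ^ 2 := by ring
          rw [this]
          exact mul_le_mul_of_nonneg_right hC3 (by positivity)
        have : C * (Δt * h ^ 2) + C * Δt ^ 2 = C * (Δt ^ 2 + Δt * h ^ 2) := by ring
        linarith
end
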